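/- arXiv:1004.4540 — 4 statements merged into one kernel-verified Lean document; each statement's English description precedes it below -/
import Mathlib

section
/- Let (A, E) be a Frobenius category and let P denote its full subcategory of projective objects. Suppose F ⊆ P is a full additive subcategory satisfying: (1) every object A of A fits into a sequence A →(i_A) F_A →(p_A) P_A with F_A ∈ F, such that i_A is a left F-approximation of A, P_A ∈ P, and p_A is a pseudo-cokernel of i_A; (2) every object A of A fits into a sequence P^A →(i^A) F^A →(p^A) A with F^A ∈ F, such that p^A is a right F-approximation of A, P^A ∈ P, and i^A is a pseudo-kernel of p^A. Then the pair (A/[F], E_F) is a Frobenius category. -/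
/-!
Since every object `W` has a left `F`-approximation `i_W : W ⟶ F_W`, a morphism out of `W` lies
in `[F]` exactly when it factors through `i_W` (dually, a morphism into `W` lies in `[F]` exactly
when it factors through `p^W`). Combined with the pseudo-cokernel `p_W` and projectivity of `P_W`
this shows that the projection `π : A ⥤ A/[F]` sends inflations to monomorphisms; dually, since
`P^W` is also injective in a Frobenius category, it sends deflations to epimorphisms. Hence `π`
sends conflations to kernel-cokernel pairs and preserves pullbacks along deflations and pushouts
along inflations, which gives the axioms of an exact structure for `E_F`. Finally, the images of the
projective-injective objects of `A` are projective and injective for `E_F`, and a projective (or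
injective) object of `A/[F]` is a retract of such an image.
-/

universe v u

open CategoryTheory Limits

namespace Paper

variable {A : Type u} [Category.{v} A]

section Defs
variable [Preadditive A]

/-- `i` is a kernel of `d`. -/
def IsKer {X Y Z : A} (i : X ⟶ Y) (d : Y ⟶ Z) : Prop :=
  i ≫ d = 0 ∧ ∀ ⦃W : A⦄ (g : W ⟶ Y), g ≫ d = 0 → ∃! g' : W ⟶ X, g' ≫ i = g

/-- `d` is a cokernel of `i`. -/
def IsCoker {X Y Z : A} (i : X ⟶ Y) (d : Y ⟶ Z) : Prop :=
  i ≫ d = 0 ∧ ∀ ⦃W : A⦄ (g : Y ⟶ W), i ≫ g = 0 → ∃! g' : Z ⟶ W, d ≫ g' = g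

/-- An exact structure in the sense of Quillen (following Keller's axioms) on an
additive category `A`: a class of kernel-cokernel pairs (conflations), closed under
isomorphism, satisfying the axioms (Ex0), (Ex1), (Ex1op), (Ex2), (Ex2op). -/
structure ExactStructure (A : Type u) [Category.{v} A] [Preadditive A] where
  /-- the class of conflations `X ⟶ Y ⟶ Z` -/
  IsConflation : ∀ ⦃X Y Z : A⦄, (X ⟶ Y) → (Y ⟶ Z) → Prop
  ker_of_conflation : ∀ ⦃X Y Z : A⦄ {i : X ⟶ Y} {d : Y ⟶ Z}, IsConflation i d → IsKer i d
  coker_of_conflation : ∀ ⦃X Y Z : A⦄ {i : X ⟶ Y} {d : Y ⟶ Z}, IsConflation i d → IsCoker i d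
  iso_closed : ∀ ⦃X Y Z X' Y' Z' : A⦄ {i : X ⟶ Y} {d : Y ⟶ Z} {i' : X' ⟶ Y'} {d' : Y' ⟶ Z'}
    (eX : X ≅ X') (eY : Y ≅ Y') (eZ : Z ≅ Z'),
    i ≫ eY.hom = eX.hom ≫ i' → d ≫ eZ.hom = eY.hom ≫ d' →
    IsConflation i d → IsConflation i' d'
  ex0 : ∀ ⦃Z : A⦄, IsZero Z → ∃ (X : A) (i : X ⟶ Z), IsConflation i (𝟙 Z)
  ex1 : ∀ ⦃Y Z W : A⦄ {d : Y ⟶ Z} {e : Z ⟶ W},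
    (∃ (X : A) (i : X ⟶ Y), IsConflation i d) → (∃ (X : A) (i : X ⟶ Z), IsConflation i e) →
    ∃ (X : A) (i : X ⟶ Y), IsConflation i (d ≫ e)
  ex1op : ∀ ⦃X Y W : A⦄ {i : X ⟶ Y} {j : Y ⟶ W},
    (∃ (Z : A) (d : Y ⟶ Z), IsConflation i d) → (∃ (Z : A) (d : W ⟶ Z), IsConflation j d) →
    ∃ (Z : A) (d : W ⟶ Z), IsConflation (i ≫ j) d
  ex2 : ∀ ⦃Y Z Z' : A⦄ (d : Y ⟶ Z) (f : Z' ⟶ Z),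
    (∃ (X : A) (i : X ⟶ Y), IsConflation i d) →
    ∃ (Y' : A) (d' : Y' ⟶ Z') (f' : Y' ⟶ Y),
      IsPullback d' f' f d ∧ ∃ (X : A) (i : X ⟶ Y'), IsConflation i d'
  ex2op : ∀ ⦃X Y X' : A⦄ (i : X ⟶ Y) (f : X ⟶ X'),
    (∃ (Z : A) (d : Y ⟶ Z), IsConflation i d) →
    ∃ (Y' : A) (i' : X' ⟶ Y') (f' : Y ⟶ Y'),
      IsPushout i f f' i' ∧ ∃ (Z : A) (d : Y' ⟶ Z), IsConflation i' d

namespace ExactStructure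

variable (E : ExactStructure A)

/-- `d` is a deflation. -/
def IsDeflation {Y Z : A} (d : Y ⟶ Z) : Prop :=
  ∃ (X : A) (i : X ⟶ Y), E.IsConflation i d

/-- `i` is an inflation. -/
def IsInflation {X Y : A} (i : X ⟶ Y) : Prop :=
  ∃ (Z : A) (d : Y ⟶ Z), E.IsConflation i d

/-- projective object: every deflation onto it splits. -/
def Proj (P : A) : Prop :=
  ∀ ⦃Y : A⦄ (d : Y ⟶ P), E.IsDeflation d → ∃ s : P ⟶ Y, s ≫ d = 𝟙 P

/-- injective object: every inflation out of it splits. -/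
def Inj (I : A) : Prop :=
  ∀ ⦃Y : A⦄ (i : I ⟶ Y), E.IsInflation i → ∃ r : Y ⟶ I, i ≫ r = 𝟙 I

/-- enough projective objects -/
def EnoughProj : Prop :=
  ∀ X : A, ∃ (P : A) (d : P ⟶ X), E.Proj P ∧ E.IsDeflation d

/-- enough injective objects -/
def EnoughInj : Prop :=
  ∀ X : A, ∃ (I : A) (i : X ⟶ I), E.Inj I ∧ E.IsInflation i

/-- A Frobenius category: enough projectives, enough injectives, and the two classes coincide. -/
structure IsFrobenius : Prop where
  enoughProj : E.EnoughProj
  enoughInj : E.EnoughInj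
  proj_iff_inj : ∀ P : A, E.Proj P ↔ E.Inj P

end ExactStructure

end Defs

end Paper
namespace Paper

variable {A : Type u} [Category.{v} A] [Preadditive A]

/-- `f` factors through an object of `F`. -/
def FactorsThru (F : Set A) {X Y : A} (f : X ⟶ Y) : Prop :=
  ∃ Z ∈ F, ∃ (g : X ⟶ Z) (h : Z ⟶ Y), g ≫ h = f

/-- The ideal `[F](X, Y)` of morphisms factoring through objects of `F`
(as an additive subgroup, taking the subgroup generated by such morphisms;
for an additive subcategory `F` this is exactly the set of such morphisms). -/
def fIdeal (F : Set A) (X Y : A) : AddSubgroup (X ⟶ Y) :=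
  AddSubgroup.closure {f | FactorsThru F f}

lemma fIdeal_comp_right (F : Set A) {X Y W : A} {f : X ⟶ Y} (hf : f ∈ fIdeal F X Y)
    (v : Y ⟶ W) : f ≫ v ∈ fIdeal F X W := by
  have : f ≫ v = ((Preadditive.rightComp X v : (X ⟶ Y) →+ (X ⟶ W)) f) := rfl
  rw [this]
  have hmap : (fIdeal F X Y).map (Preadditive.rightComp X v) ≤ fIdeal F X W := by
    rw [fIdeal, AddMonoidHom.map_closure]
    apply (AddSubgroup.closure_le _).2
    rintro x ⟨y, ⟨Z, hZ, g, h, rfl⟩, rfl⟩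
    exact AddSubgroup.subset_closure ⟨Z, hZ, g, h ≫ v,
      show g ≫ h ≫ v = (g ≫ h) ≫ v from (Category.assoc g h v).symm⟩
  exact hmap (AddSubgroup.mem_map_of_mem _ hf)

lemma fIdeal_comp_left (F : Set A) {X Y W : A} (u : W ⟶ X) {f : X ⟶ Y}
    (hf : f ∈ fIdeal F X Y) : u ≫ f ∈ fIdeal F W Y := by
  have : u ≫ f = ((Preadditive.leftComp Y u : (X ⟶ Y) →+ (W ⟶ Y)) f) := rfl
  rw [this]
  have hmap : (fIdeal F X Y).map (Preadditive.leftComp Y u) ≤ fIdeal F W Y := by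
    rw [fIdeal, AddMonoidHom.map_closure]
    apply (AddSubgroup.closure_le _).2
    rintro x ⟨y, ⟨Z, hZ, g, h, rfl⟩, rfl⟩
    exact AddSubgroup.subset_closure ⟨Z, hZ, u ≫ g, h,
      show (u ≫ g) ≫ h = u ≫ g ≫ h from Category.assoc u g h⟩
  exact hmap (AddSubgroup.mem_map_of_mem _ hf)

/-- Objects of the factor category `A/[F]`. -/
structure FObj (A : Type u) (F : Set A) : Type u where
  obj : A

/-- The factor category `A/[F]`: same objects as `A`, morphisms are
residue classes modulo the ideal `[F]`. -/
instance factorCategory (F : Set A) : Category.{v} (FObj A F) where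
  Hom X Y := (X.obj ⟶ Y.obj) ⧸ fIdeal F X.obj Y.obj
  id X := QuotientAddGroup.mk (𝟙 X.obj)
  comp {X Y Z} f g :=
    Quotient.liftOn₂ f g (fun f g => QuotientAddGroup.mk (f ≫ g))
      (by
        intro a₁ a₂ b₁ b₂ h₁ h₂
        have h₁' : -a₁ + b₁ ∈ fIdeal F X.obj Y.obj := QuotientAddGroup.eq.mp (Quotient.sound h₁)
        have h₂' : -a₂ + b₂ ∈ fIdeal F Y.obj Z.obj := QuotientAddGroup.eq.mp (Quotient.sound h₂)
        show QuotientAddGroup.mk (a₁ ≫ a₂) = QuotientAddGroup.mk (b₁ ≫ b₂)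
        refine QuotientAddGroup.eq.mpr ?_
        have heq : -(a₁ ≫ a₂) + b₁ ≫ b₂ = (-a₁ + b₁) ≫ a₂ + b₁ ≫ (-a₂ + b₂) := by
          simp only [Preadditive.add_comp, Preadditive.comp_add, Preadditive.neg_comp,
            Preadditive.comp_neg]
          abel
        rw [heq]
        exact add_mem (fIdeal_comp_right F h₁' a₂) (fIdeal_comp_left F b₁ h₂'))
  id_comp {X Y} f := by
    induction f using Quotient.inductionOn with
    | h f => exact congrArg QuotientAddGroup.mk (Category.id_comp f)
  comp_id {X Y} f := by
    induction f using Quotient.inductionOn with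
    | h f => exact congrArg QuotientAddGroup.mk (Category.comp_id f)
  assoc {W X Y Z} f g h := by
    induction f using Quotient.inductionOn with
    | h f =>
      induction g using Quotient.inductionOn with
      | h g =>
        induction h using Quotient.inductionOn with
        | h h => exact congrArg QuotientAddGroup.mk (Category.assoc f g h)

instance factorPreadditive (F : Set A) : Preadditive (FObj A F) where
  homGroup X Y := inferInstanceAs (AddCommGroup ((X.obj ⟶ Y.obj) ⧸ fIdeal F X.obj Y.obj))
  add_comp P Q R f f' g := by
    induction f using Quotient.inductionOn with
    | h f =>
      induction f' using Quotient.inductionOn with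
      | h f' =>
        induction g using Quotient.inductionOn with
        | h g =>
          show QuotientAddGroup.mk ((f + f') ≫ g) =
            QuotientAddGroup.mk (f ≫ g) + QuotientAddGroup.mk (f' ≫ g)
          rw [← QuotientAddGroup.mk_add]
          exact congrArg QuotientAddGroup.mk (Preadditive.add_comp _ _ _ f f' g)
  comp_add P Q R f g g' := by
    induction f using Quotient.inductionOn with
    | h f =>
      induction g using Quotient.inductionOn with
      | h g =>
        induction g' using Quotient.inductionOn with
        | h g' =>
          show QuotientAddGroup.mk (f ≫ (g + g')) =
            QuotientAddGroup.mk (f ≫ g) + QuotientAddGroup.mk (f ≫ g')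
          rw [← QuotientAddGroup.mk_add]
          exact congrArg QuotientAddGroup.mk (Preadditive.comp_add _ _ _ f g g')

/-- The canonical projection functor `π : A ⟶ A/[F]`. -/
def fproj (F : Set A) : A ⥤ FObj A F where
  obj X := ⟨X⟩
  map f := QuotientAddGroup.mk f
  map_id _ := rfl
  map_comp _ _ := rfl

/-- The class `E_F` of composable pairs in `A/[F]` isomorphic to the image of a
conflation of `(A, E)` under the projection functor. -/
def MemEF (E : ExactStructure A) (F : Set A) ⦃X Y Z : FObj A F⦄
    (i : X ⟶ Y) (d : Y ⟶ Z) : Prop :=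
  ∃ (X' Y' Z' : A) (i' : X' ⟶ Y') (d' : Y' ⟶ Z'), E.IsConflation i' d' ∧
    ∃ (eX : (fproj F).obj X' ≅ X) (eY : (fproj F).obj Y' ≅ Y) (eZ : (fproj F).obj Z' ≅ Z),
      (fproj F).map i' ≫ eY.hom = eX.hom ≫ i ∧ (fproj F).map d' ≫ eZ.hom = eY.hom ≫ d

section Hyp
variable [HasZeroObject A] [HasBinaryBiproducts A]

/-- The hypotheses of Theorem 3.1: `F` is a full additive subcategory of the
projective objects satisfying the approximation conditions (1) and (2). -/
structure FactorHyp (E : ExactStructure A) (F : Set A) : Prop where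
  /-- every object of `F` is projective -/
  proj : ∀ P ∈ F, E.Proj P
  /-- `F` is additive: it contains a zero object -/
  zero_mem : ∃ Z ∈ F, IsZero Z
  /-- `F` is additive: it is closed under direct sums -/
  sum_mem : ∀ X Y : A, X ∈ F → Y ∈ F → ∃ W ∈ F, Nonempty (W ≅ X ⊞ Y)
  /-- condition (1): `A ⟶ F_A ⟶ P_A` with `i_A` a left `F`-approximation and
  `p_A` a pseudo-cokernel of `i_A`, `P_A` projective -/
  cond1 : ∀ X : A, ∃ (FA PA : A) (iA : X ⟶ FA) (pA : FA ⟶ PA), FA ∈ F ∧ E.Proj PA ∧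
    (∀ F₁ ∈ F, ∀ g : X ⟶ F₁, ∃ t : FA ⟶ F₁, iA ≫ t = g) ∧
    iA ≫ pA = 0 ∧ (∀ ⦃W : A⦄ (c : FA ⟶ W), iA ≫ c = 0 → ∃ t : PA ⟶ W, pA ≫ t = c)
  /-- condition (2): `P^A ⟶ F^A ⟶ A` with `p^A` a right `F`-approximation and
  `i^A` a pseudo-kernel of `p^A`, `P^A` projective -/
  cond2 : ∀ X : A, ∃ (PA FA : A) (iA : PA ⟶ FA) (pA : FA ⟶ X), FA ∈ F ∧ E.Proj PA ∧
    (∀ F₁ ∈ F, ∀ g : F₁ ⟶ X, ∃ t : F₁ ⟶ FA, t ≫ pA = g) ∧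
    iA ≫ pA = 0 ∧ (∀ ⦃W : A⦄ (c : W ⟶ FA), c ≫ pA = 0 → ∃ t : W ⟶ PA, t ≫ iA = c)

end Hyp

end Paper

namespace Paper

open CategoryTheory Limits

section Preadditive

variable {C : Type*} [Category C] [Preadditive C]

theorem IsKer.mono {X Y Z : C} {i : X ⟶ Y} {d : Y ⟶ Z} (h : IsKer i d) : Mono i :=
  Preadditive.mono_of_cancel_zero i fun g hg =>
    (h.2 (g ≫ i) (by rw [Category.assoc, h.1, comp_zero])).unique rfl (by rw [hg, zero_comp])

theorem IsCoker.epi {X Y Z : C} {i : X ⟶ Y} {d : Y ⟶ Z} (h : IsCoker i d) : Epi d :=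
  Preadditive.epi_of_cancel_zero d fun g hg =>
    (h.2 (d ≫ g) (by rw [← Category.assoc, h.1, zero_comp])).unique rfl (by rw [hg, comp_zero])

theorem IsKer.of_mono {X Y Z : C} {i : X ⟶ Y} {d : Y ⟶ Z} [Mono i] (w : i ≫ d = 0)
    (lift : ∀ ⦃W : C⦄ (g : W ⟶ Y), g ≫ d = 0 → ∃ g' : W ⟶ X, g' ≫ i = g) : IsKer i d :=
  ⟨w, fun _ g hg => (lift g hg).elim fun g' hg' =>
    ⟨g', hg', fun _ h => (cancel_mono i).1 (h.trans hg'.symm)⟩⟩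

theorem IsCoker.of_epi {X Y Z : C} {i : X ⟶ Y} {d : Y ⟶ Z} [Epi d] (w : i ≫ d = 0)
    (desc : ∀ ⦃W : C⦄ (g : Y ⟶ W), i ≫ g = 0 → ∃ g' : Z ⟶ W, d ≫ g' = g) : IsCoker i d :=
  ⟨w, fun _ g hg => (desc g hg).elim fun g' hg' =>
    ⟨g', hg', fun _ h => (cancel_epi d).1 (h.trans hg'.symm)⟩⟩

theorem IsKer.of_iso {X Y Z X' Y' Z' : C} {i : X ⟶ Y} {d : Y ⟶ Z} {i' : X' ⟶ Y'}
    {d' : Y' ⟶ Z'} (eX : X ≅ X') (eY : Y ≅ Y') (eZ : Z ≅ Z')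
    (hi : i ≫ eY.hom = eX.hom ≫ i') (hd : d ≫ eZ.hom = eY.hom ≫ d') (h : IsKer i d) :
    IsKer i' d' := by
  obtain rfl : i' = eX.inv ≫ i ≫ eY.hom := by simp [hi]
  obtain rfl : d' = eY.inv ≫ d ≫ eZ.hom := by simp [hd]
  have := IsKer.mono h
  refine IsKer.of_mono (by simp [reassoc_of% h.1]) fun W g hg => ?_
  obtain ⟨g', hg'⟩ :=
    (h.2 (g ≫ eY.inv) (by rw [← cancel_mono eZ.hom]; simpa using hg)).exists
  exact ⟨g' ≫ eX.hom, by simp [reassoc_of% hg']⟩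

theorem IsCoker.of_iso {X Y Z X' Y' Z' : C} {i : X ⟶ Y} {d : Y ⟶ Z} {i' : X' ⟶ Y'}
    {d' : Y' ⟶ Z'} (eX : X ≅ X') (eY : Y ≅ Y') (eZ : Z ≅ Z')
    (hi : i ≫ eY.hom = eX.hom ≫ i') (hd : d ≫ eZ.hom = eY.hom ≫ d') (h : IsCoker i d) :
    IsCoker i' d' := by
  obtain rfl : i' = eX.inv ≫ i ≫ eY.hom := by simp [hi]
  obtain rfl : d' = eY.inv ≫ d ≫ eZ.hom := by simp [hd]
  have := IsCoker.epi h
  refine IsCoker.of_epi (by simp [reassoc_of% h.1]) fun W g hg => ?_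
  obtain ⟨g', hg'⟩ := (h.2 (eY.hom ≫ g) (by simpa using hg)).exists
  exact ⟨eZ.inv ≫ g', by simp [hg']⟩

theorem isPullback_of_lift_of_cancel_zero {P X Y Z : C} {a : P ⟶ X} {b : P ⟶ Y} {f : X ⟶ Z}
    {g : Y ⟶ Z} (w : a ≫ f = b ≫ g)
    (lift : ∀ ⦃W : C⦄ (x : W ⟶ X) (y : W ⟶ Y), x ≫ f = y ≫ g →
      ∃ c : W ⟶ P, c ≫ a = x ∧ c ≫ b = y)
    (cancel : ∀ ⦃W : C⦄ (c : W ⟶ P), c ≫ a = 0 → c ≫ b = 0 → c = 0) :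
    IsPullback a b f g := by
  choose l hla hlb using lift
  refine ⟨⟨w⟩, ⟨PullbackCone.IsLimit.mk w (fun s => l _ _ s.condition)
    (fun s => hla _ _ s.condition) (fun s => hlb _ _ s.condition) fun s m h₁ h₂ => ?_⟩⟩
  rw [← sub_eq_zero]
  exact cancel _ (by simp [h₁, hla]) (by simp [h₂, hlb])

theorem isPushout_of_desc_of_cancel_zero {Z X Y P : C} {f : Z ⟶ X} {g : Z ⟶ Y} {a : X ⟶ P}
    {b : Y ⟶ P} (w : f ≫ a = g ≫ b)
    (desc : ∀ ⦃W : C⦄ (x : X ⟶ W) (y : Y ⟶ W), f ≫ x = g ≫ y →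
      ∃ c : P ⟶ W, a ≫ c = x ∧ b ≫ c = y)
    (cancel : ∀ ⦃W : C⦄ (c : P ⟶ W), a ≫ c = 0 → b ≫ c = 0 → c = 0) :
    IsPushout f g a b := by
  choose l hla hlb using desc
  refine ⟨⟨w⟩, ⟨PushoutCocone.IsColimit.mk w (fun s => l _ _ s.condition)
    (fun s => hla _ _ s.condition) (fun s => hlb _ _ s.condition) fun s m h₁ h₂ => ?_⟩⟩
  rw [← sub_eq_zero]
  exact cancel _ (by simp [h₁, hla]) (by simp [h₂, hlb])

end Preadditive

namespace ExactStructure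

variable {A : Type u} [Category.{v} A] [Preadditive A] {E : ExactStructure A}

theorem Proj.exists_lift {P Y Z : A} (hP : E.Proj P) {d : Y ⟶ Z} (hd : E.IsDeflation d)
    (f : P ⟶ Z) : ∃ g : P ⟶ Y, g ≫ d = f := by
  obtain ⟨Y', d', f', hpb, hd'⟩ := E.ex2 d f hd
  obtain ⟨s, hs⟩ := hP d' hd'
  exact ⟨s ≫ f', by rw [Category.assoc, ← hpb.w, reassoc_of% hs]⟩

theorem Inj.exists_extend {I X Y : A} (hI : E.Inj I) {i : X ⟶ Y} (hi : E.IsInflation i)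
    (f : X ⟶ I) : ∃ g : Y ⟶ I, i ≫ g = f := by
  obtain ⟨Y', i', f', hpo, hi'⟩ := E.ex2op i f hi
  obtain ⟨r, hr⟩ := hI i' hi'
  exact ⟨f' ≫ r, by rw [reassoc_of% hpo.w, hr, Category.comp_id]⟩

theorem Proj.of_retract {P X : A} (hP : E.Proj P) (s : X ⟶ P) (r : P ⟶ X) (hsr : s ≫ r = 𝟙 X) :
    E.Proj X := by
  intro Y d hd
  obtain ⟨g, hg⟩ := hP.exists_lift hd r
  exact ⟨s ≫ g, by rw [Category.assoc, hg, hsr]⟩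

theorem Inj.of_retract {I X : A} (hI : E.Inj I) (s : X ⟶ I) (r : I ⟶ X) (hsr : s ≫ r = 𝟙 X) :
    E.Inj X := by
  intro Y i hi
  obtain ⟨g, hg⟩ := hI.exists_extend hi s
  exact ⟨g ≫ r, by rw [reassoc_of% hg, hsr]⟩

end ExactStructure

section FactorCategory

variable {A : Type u} [Category.{v} A] [Preadditive A] {F : Set A}

instance : (fproj F).Full := ⟨fun f => QuotientAddGroup.mk_surjective f⟩

instance : (fproj F).Additive := ⟨rfl⟩

theorem fproj_obj_surjective : Function.Surjective (fproj F).obj := fun X => ⟨X.obj, rfl⟩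

theorem fproj_map_eq_zero_iff_of_leftApprox {W Y FW : A} (hFW : FW ∈ F) {iW : W ⟶ FW}
    (happrox : ∀ F₁ ∈ F, ∀ g : W ⟶ F₁, ∃ t : FW ⟶ F₁, iW ≫ t = g) (f : W ⟶ Y) :
    (fproj F).map f = 0 ↔ ∃ b : FW ⟶ Y, iW ≫ b = f := by
  suffices fIdeal F W Y = (Preadditive.leftComp Y iW).range from
    (QuotientAddGroup.eq_zero_iff f).trans (this ▸ Iff.rfl)
  refine le_antisymm ((AddSubgroup.closure_le _).2 ?_) ?_
  · rintro _ ⟨Z, hZ, g, h, rfl⟩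
    obtain ⟨t, rfl⟩ := happrox Z hZ g
    exact ⟨t ≫ h, (Category.assoc _ _ _).symm⟩
  · rintro _ ⟨b, rfl⟩
    exact AddSubgroup.subset_closure ⟨FW, hFW, iW, b, rfl⟩

theorem fproj_map_eq_zero_iff_of_rightApprox {W X FW : A} (hFW : FW ∈ F) {pW : FW ⟶ W}
    (happrox : ∀ F₁ ∈ F, ∀ g : F₁ ⟶ W, ∃ t : F₁ ⟶ FW, t ≫ pW = g) (f : X ⟶ W) :
    (fproj F).map f = 0 ↔ ∃ b : X ⟶ FW, b ≫ pW = f := by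
  suffices fIdeal F X W = (Preadditive.rightComp X pW).range from
    (QuotientAddGroup.eq_zero_iff f).trans (this ▸ Iff.rfl)
  refine le_antisymm ((AddSubgroup.closure_le _).2 ?_) ?_
  · rintro _ ⟨Z, hZ, g, h, rfl⟩
    obtain ⟨t, rfl⟩ := happrox Z hZ h
    exact ⟨g ≫ t, Category.assoc _ _ _⟩
  · rintro _ ⟨b, rfl⟩
    exact AddSubgroup.subset_closure ⟨FW, hFW, b, pW, rfl⟩

end FactorCategory

section Approximations

variable {A : Type u} [Category.{v} A] [Preadditive A] [HasBinaryBiproducts A]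
  {E : ExactStructure A} {F : Set A}

theorem mono_fproj_map_of_isInflation (hF : FactorHyp E F) {X Y : A} {i : X ⟶ Y}
    (hi : E.IsInflation i) : Mono ((fproj F).map i) := by
  obtain ⟨Z, d, hc⟩ := hi
  have hker := E.ker_of_conflation hc
  have := IsKer.mono hker
  refine Preadditive.mono_of_cancel_zero _ ?_
  intro W' h' hh
  obtain ⟨W, rfl⟩ := fproj_obj_surjective W'
  obtain ⟨h, rfl⟩ := (fproj F).map_surjective h'
  obtain ⟨FW, PW, iW, pW, hFW, hPW, happrox, hzero, hpcoker⟩ := hF.cond1 W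
  rw [← Functor.map_comp] at hh
  rw [fproj_map_eq_zero_iff_of_leftApprox hFW happrox] at hh ⊢
  obtain ⟨b, hb⟩ := hh
  -- `b ≫ d` is killed by `i_W`, so it factors through `p_W`; as `P_W` is projective, `b` is
  -- then `v ≫ i` up to a morphism through `p_W`, which `i_W` kills: `h = i_W ≫ v`.
  obtain ⟨t, ht⟩ :=
    hpcoker (b ≫ d) (by rw [← Category.assoc, hb, Category.assoc, hker.1, comp_zero])
  obtain ⟨t₁, ht₁⟩ := hPW.exists_lift ⟨X, i, hc⟩ t
  obtain ⟨v, hv⟩ := (hker.2 (b - pW ≫ t₁) (by simp [ht₁, ht])).exists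
  refine ⟨v, (cancel_mono i).1 ?_⟩
  rw [Category.assoc, hv, Preadditive.comp_sub, reassoc_of% hzero, zero_comp, sub_zero, hb]

theorem epi_fproj_map_of_isDeflation (hF : FactorHyp E F) (hE : E.IsFrobenius) {Y Z : A}
    {d : Y ⟶ Z} (hd : E.IsDeflation d) : Epi ((fproj F).map d) := by
  obtain ⟨X, i, hc⟩ := hd
  have hcoker := E.coker_of_conflation hc
  have := IsCoker.epi hcoker
  refine Preadditive.epi_of_cancel_zero _ ?_
  intro W' h' hh
  obtain ⟨W, rfl⟩ := fproj_obj_surjective W'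
  obtain ⟨h, rfl⟩ := (fproj F).map_surjective h'
  obtain ⟨PW, FW, iW, pW, hFW, hPW, happrox, hzero, hpker⟩ := hF.cond2 W
  rw [← Functor.map_comp] at hh
  rw [fproj_map_eq_zero_iff_of_rightApprox hFW happrox] at hh ⊢
  obtain ⟨b, hb⟩ := hh
  obtain ⟨t, ht⟩ := hpker (i ≫ b) (by rw [Category.assoc, hb, reassoc_of% hcoker.1, zero_comp])
  obtain ⟨t₁, ht₁⟩ := ((hE.proj_iff_inj PW).1 hPW).exists_extend ⟨Z, d, hc⟩ t
  obtain ⟨v, hv⟩ := (hcoker.2 (b - t₁ ≫ iW) (by simp [reassoc_of% ht₁, ht])).exists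
  refine ⟨v, (cancel_epi d).1 ?_⟩
  rw [reassoc_of% hv, Preadditive.sub_comp, Category.assoc, hzero, comp_zero, sub_zero, hb]

theorem exists_lift_of_fproj_map_eq (hF : FactorHyp E F) {W Y Z : A} {d : Y ⟶ Z}
    (hd : E.IsDeflation d) {a : W ⟶ Z} {y : W ⟶ Y}
    (h : (fproj F).map a = (fproj F).map (y ≫ d)) :
    ∃ y' : W ⟶ Y, (fproj F).map y' = (fproj F).map y ∧ y' ≫ d = a := by
  obtain ⟨FW, -, iW, -, hFW, -, happrox, -⟩ := hF.cond1 W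
  rw [← sub_eq_zero, ← Functor.map_sub, fproj_map_eq_zero_iff_of_leftApprox hFW happrox] at h
  obtain ⟨b, hb⟩ := h
  obtain ⟨b₁, hb₁⟩ := (hF.proj FW hFW).exists_lift hd b
  refine ⟨y + iW ≫ b₁, ?_, ?_⟩
  · rw [Functor.map_add, (fproj_map_eq_zero_iff_of_leftApprox hFW happrox _).2 ⟨b₁, rfl⟩,
      add_zero]
  · rw [Preadditive.add_comp, Category.assoc, hb₁, hb, add_sub_cancel]

theorem exists_extend_of_fproj_map_eq (hF : FactorHyp E F) (hE : E.IsFrobenius) {X Y W : A}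
    {i : X ⟶ Y} (hi : E.IsInflation i) {a : X ⟶ W} {y : Y ⟶ W}
    (h : (fproj F).map a = (fproj F).map (i ≫ y)) :
    ∃ y' : Y ⟶ W, (fproj F).map y' = (fproj F).map y ∧ i ≫ y' = a := by
  obtain ⟨-, FW, -, pW, hFW, -, happrox, -⟩ := hF.cond2 W
  rw [← sub_eq_zero, ← Functor.map_sub, fproj_map_eq_zero_iff_of_rightApprox hFW happrox] at h
  obtain ⟨b, hb⟩ := h
  obtain ⟨b₁, hb₁⟩ := ((hE.proj_iff_inj FW).1 (hF.proj FW hFW)).exists_extend hi b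
  refine ⟨y + b₁ ≫ pW, ?_, ?_⟩
  · rw [Functor.map_add, (fproj_map_eq_zero_iff_of_rightApprox hFW happrox _).2 ⟨b₁, rfl⟩,
      add_zero]
  · rw [Preadditive.comp_add, reassoc_of% hb₁, hb, add_sub_cancel]

end Approximations

section Conflations

variable {A : Type u} [Category.{v} A] [Preadditive A] [HasBinaryBiproducts A]
  {E : ExactStructure A} {F : Set A}

theorem isKer_fproj_map (hF : FactorHyp E F) {X Y Z : A} {i : X ⟶ Y} {d : Y ⟶ Z}
    (hc : E.IsConflation i d) : IsKer ((fproj F).map i) ((fproj F).map d) := by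
  have hker := E.ker_of_conflation hc
  have := mono_fproj_map_of_isInflation hF ⟨Z, d, hc⟩
  refine IsKer.of_mono (by rw [← Functor.map_comp, hker.1, Functor.map_zero]) fun W' g' hg => ?_
  obtain ⟨W, rfl⟩ := fproj_obj_surjective W'
  obtain ⟨g, rfl⟩ := (fproj F).map_surjective g'
  obtain ⟨g₁, hg₁, hg₁d⟩ := exists_lift_of_fproj_map_eq hF ⟨X, i, hc⟩ (a := 0) (y := g)
    (by rw [Functor.map_zero, Functor.map_comp, hg])
  obtain ⟨g₀, hg₀⟩ := (hker.2 g₁ hg₁d).exists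
  exact ⟨(fproj F).map g₀, by rw [← Functor.map_comp, hg₀, hg₁]⟩

theorem isCoker_fproj_map (hF : FactorHyp E F) (hE : E.IsFrobenius) {X Y Z : A} {i : X ⟶ Y}
    {d : Y ⟶ Z} (hc : E.IsConflation i d) : IsCoker ((fproj F).map i) ((fproj F).map d) := by
  have hcoker := E.coker_of_conflation hc
  have := epi_fproj_map_of_isDeflation hF hE ⟨X, i, hc⟩
  refine IsCoker.of_epi (by rw [← Functor.map_comp, hcoker.1, Functor.map_zero]) fun W' g' hg => ?_
  obtain ⟨W, rfl⟩ := fproj_obj_surjective W'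
  obtain ⟨g, rfl⟩ := (fproj F).map_surjective g'
  obtain ⟨g₁, hg₁, hg₁i⟩ := exists_extend_of_fproj_map_eq hF hE ⟨Z, d, hc⟩ (a := 0) (y := g)
    (by rw [Functor.map_zero, Functor.map_comp, hg])
  obtain ⟨g₀, hg₀⟩ := (hcoker.2 g₁ hg₁i).exists
  exact ⟨(fproj F).map g₀, by rw [← Functor.map_comp, hg₀, hg₁]⟩

theorem isPullback_fproj_map (hF : FactorHyp E F) {P X Y Z : A} {a : P ⟶ X} {b : P ⟶ Y}
    {f : X ⟶ Z} {d : Y ⟶ Z} (hpb : IsPullback a b f d) (ha : E.IsDeflation a)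
    (hd : E.IsDeflation d) :
    IsPullback ((fproj F).map a) ((fproj F).map b) ((fproj F).map f) ((fproj F).map d) := by
  obtain ⟨K, k, hc⟩ := hd
  have hker := E.ker_of_conflation hc
  refine isPullback_of_lift_of_cancel_zero (by simp only [← Functor.map_comp, hpb.w])
    (fun W' x' y' hxy => ?_) (fun W' c' hca hcb => ?_)
  · obtain ⟨W, rfl⟩ := fproj_obj_surjective W'
    obtain ⟨x, rfl⟩ := (fproj F).map_surjective x'
    obtain ⟨y, rfl⟩ := (fproj F).map_surjective y'
    obtain ⟨y₁, hy₁, hy₁d⟩ := exists_lift_of_fproj_map_eq hF ⟨K, k, hc⟩ (a := x ≫ f) (y := y)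
      (by simpa only [Functor.map_comp] using hxy)
    exact ⟨(fproj F).map (hpb.lift x y₁ hy₁d.symm), by rw [← Functor.map_comp, hpb.lift_fst],
      by rw [← Functor.map_comp, hpb.lift_snd, hy₁]⟩
  · -- Corrected modulo `[F]` so that `c₁ ≫ a = 0`, `c` becomes `c₁ = v ≫ j` with `j` the lift
    -- of `(0, k)`, and `v` vanishes because `(fproj F).map k` is mono.
    obtain ⟨W, rfl⟩ := fproj_obj_surjective W'
    obtain ⟨c, rfl⟩ := (fproj F).map_surjective c'
    obtain ⟨c₁, hc₁, hc₁a⟩ := exists_lift_of_fproj_map_eq hF ha (a := 0) (y := c)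
      (by rw [Functor.map_zero, Functor.map_comp, hca])
    obtain ⟨v, hv⟩ := (hker.2 (c₁ ≫ b) (by rw [Category.assoc, ← hpb.w, reassoc_of% hc₁a,
      zero_comp])).exists
    have := mono_fproj_map_of_isInflation hF ⟨Z, d, hc⟩
    have hv₀ : (fproj F).map v = 0 := by
      rw [← cancel_mono ((fproj F).map k), zero_comp, ← Functor.map_comp, hv, Functor.map_comp,
        hc₁, hcb]
    have hj : (0 : K ⟶ X) ≫ f = k ≫ d := by rw [zero_comp, hker.1]
    have hc₁v : c₁ = v ≫ hpb.lift 0 k hj := hpb.hom_ext (by simp [hc₁a]) (by simp [hv])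
    rw [← hc₁, hc₁v, Functor.map_comp, hv₀, zero_comp]

theorem isPushout_fproj_map (hF : FactorHyp E F) (hE : E.IsFrobenius) {X Y Z P : A}
    {i : X ⟶ Y} {f : X ⟶ Z} {a : Y ⟶ P} {b : Z ⟶ P} (hpo : IsPushout i f a b)
    (hi : E.IsInflation i) (hb : E.IsInflation b) :
    IsPushout ((fproj F).map i) ((fproj F).map f) ((fproj F).map a) ((fproj F).map b) := by
  obtain ⟨C, c, hc⟩ := hi
  have hcoker := E.coker_of_conflation hc
  refine isPushout_of_desc_of_cancel_zero (by simp only [← Functor.map_comp, hpo.w])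
    (fun W' x' y' hxy => ?_) (fun W' e' hae hbe => ?_)
  · obtain ⟨W, rfl⟩ := fproj_obj_surjective W'
    obtain ⟨x, rfl⟩ := (fproj F).map_surjective x'
    obtain ⟨y, rfl⟩ := (fproj F).map_surjective y'
    obtain ⟨x₁, hx₁, hx₁i⟩ := exists_extend_of_fproj_map_eq hF hE ⟨C, c, hc⟩ (a := f ≫ y)
      (y := x) (by simpa only [Functor.map_comp] using hxy.symm)
    exact ⟨(fproj F).map (hpo.desc x₁ y hx₁i), by rw [← Functor.map_comp, hpo.inl_desc, hx₁],
      by rw [← Functor.map_comp, hpo.inr_desc]⟩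
  · obtain ⟨W, rfl⟩ := fproj_obj_surjective W'
    obtain ⟨e, rfl⟩ := (fproj F).map_surjective e'
    obtain ⟨e₁, he₁, he₁b⟩ := exists_extend_of_fproj_map_eq hF hE hb (a := 0) (y := e)
      (by rw [Functor.map_zero, Functor.map_comp, hbe])
    obtain ⟨v, hv⟩ := (hcoker.2 (a ≫ e₁) (by rw [reassoc_of% hpo.w, he₁b, comp_zero])).exists
    have := epi_fproj_map_of_isDeflation hF hE ⟨X, i, hc⟩
    have hv₀ : (fproj F).map v = 0 := by
      rw [← cancel_epi ((fproj F).map c), comp_zero, ← Functor.map_comp, hv, Functor.map_comp,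
        he₁, hae]
    have hj : i ≫ c = f ≫ (0 : Z ⟶ C) := by rw [comp_zero, hcoker.1]
    have he₁v : e₁ = hpo.desc c 0 hj ≫ v := hpo.hom_ext (by simp [hv]) (by simp [he₁b])
    rw [← he₁, he₁v, Functor.map_comp, hv₀, comp_zero]

end Conflations

section FactorExactStructure

variable {A : Type u} [Category.{v} A] [Preadditive A] {E : ExactStructure A} {F : Set A}

def IsDeflationEF (E : ExactStructure A) (F : Set A) {Y Z : FObj A F} (d : Y ⟶ Z) : Prop :=
  ∃ (X : FObj A F) (i : X ⟶ Y), MemEF E F i d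

def IsInflationEF (E : ExactStructure A) (F : Set A) {X Y : FObj A F} (i : X ⟶ Y) : Prop :=
  ∃ (Z : FObj A F) (d : Y ⟶ Z), MemEF E F i d

theorem memEF_fproj_map {X Y Z : A} {i : X ⟶ Y} {d : Y ⟶ Z} (hc : E.IsConflation i d) :
    MemEF E F ((fproj F).map i) ((fproj F).map d) :=
  ⟨X, Y, Z, i, d, hc, Iso.refl _, Iso.refl _, Iso.refl _, by simp, by simp⟩

theorem MemEF.of_iso {X Y Z X' Y' Z' : FObj A F} {i : X ⟶ Y} {d : Y ⟶ Z} {i' : X' ⟶ Y'}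
    {d' : Y' ⟶ Z'} (eX : X ≅ X') (eY : Y ≅ Y') (eZ : Z ≅ Z')
    (hi : i ≫ eY.hom = eX.hom ≫ i') (hd : d ≫ eZ.hom = eY.hom ≫ d') (h : MemEF E F i d) :
    MemEF E F i' d' := by
  obtain ⟨X₀, Y₀, Z₀, i₀, d₀, hc, fX, fY, fZ, hi₀, hd₀⟩ := h
  exact ⟨X₀, Y₀, Z₀, i₀, d₀, hc, fX ≪≫ eX, fY ≪≫ eY, fZ ≪≫ eZ,
    by simp [reassoc_of% hi₀, hi], by simp [reassoc_of% hd₀, hd]⟩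

theorem isDeflationEF_id_of_isZero {O : A} (hO : IsZero O) {Z : FObj A F} (hZ : IsZero Z) :
    IsDeflationEF E F (𝟙 Z) := by
  obtain ⟨X, i, hc⟩ := E.ex0 hO
  have hO' : IsZero ((fproj F).obj O) := (fproj F).map_isZero hO
  exact ⟨(fproj F).obj X, 0, X, O, O, i, 𝟙 O, hc, Iso.refl _, hO'.iso hZ, hO'.iso hZ,
    hZ.eq_of_tgt _ _, hZ.eq_of_tgt _ _⟩

variable [HasBinaryBiproducts A]

theorem MemEF.isKer (hF : FactorHyp E F) {X Y Z : FObj A F} {i : X ⟶ Y} {d : Y ⟶ Z}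
    (h : MemEF E F i d) : IsKer i d := by
  obtain ⟨_, _, _, _, _, hc, eX, eY, eZ, hi, hd⟩ := h
  exact (isKer_fproj_map hF hc).of_iso eX eY eZ hi hd

theorem MemEF.isCoker (hF : FactorHyp E F) (hE : E.IsFrobenius) {X Y Z : FObj A F}
    {i : X ⟶ Y} {d : Y ⟶ Z} (h : MemEF E F i d) : IsCoker i d := by
  obtain ⟨_, _, _, _, _, hc, eX, eY, eZ, hi, hd⟩ := h
  exact (isCoker_fproj_map hF hE hc).of_iso eX eY eZ hi hd

/-- The isomorphisms allowed in `E_F` need not lift to `A`; pulling the conflation back along a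
lift of the isomorphism on the target replaces them by a genuine deflation. -/
theorem isDeflationEF_iff (hF : FactorHyp E F) {X Y : A}
    (d : (fproj F).obj X ⟶ (fproj F).obj Y) :
    IsDeflationEF E F d ↔ ∃ (M : A) (g : M ⟶ Y) (e : M ⟶ X), E.IsDeflation g ∧
      IsIso ((fproj F).map e) ∧ (fproj F).map g = (fproj F).map e ≫ d := by
  constructor
  · rintro ⟨-, -, X', Y', Z', i', d', hc, -, eY, eZ, -, hd⟩
    obtain ⟨w, hw⟩ := (fproj F).map_surjective eZ.inv
    obtain ⟨y, hy⟩ := (fproj F).map_surjective eY.hom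
    obtain ⟨M, g, f, hpb, hg⟩ := E.ex2 d' w ⟨X', i', hc⟩
    have := (isPullback_fproj_map hF hpb hg ⟨X', i', hc⟩).isIso_snd_of_isIso
      (by rw [hw]; infer_instance)
    refine ⟨M, g, f ≫ y, hg, by rw [Functor.map_comp, hy]; infer_instance, ?_⟩
    rw [Functor.map_comp, hy, Category.assoc, ← hd, ← Functor.map_comp_assoc, ← hpb.w,
      Functor.map_comp_assoc, hw, Iso.inv_hom_id, Category.comp_id]
  · rintro ⟨M, g, e, ⟨K, k, hc⟩, he, h⟩
    exact ⟨(fproj F).obj K, (fproj F).map k ≫ (fproj F).map e, K, M, Y, k, g, hc, Iso.refl _,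
      asIso ((fproj F).map e), Iso.refl _, by simp, by simp [h]⟩

theorem isInflationEF_iff (hF : FactorHyp E F) (hE : E.IsFrobenius) {X Y : A}
    (i : (fproj F).obj X ⟶ (fproj F).obj Y) :
    IsInflationEF E F i ↔ ∃ (M : A) (g : X ⟶ M) (e : Y ⟶ M), E.IsInflation g ∧
      IsIso ((fproj F).map e) ∧ (fproj F).map g = i ≫ (fproj F).map e := by
  constructor
  · rintro ⟨-, -, X', Y', Z', i', d', hc, eX, eY, -, hi, -⟩
    obtain ⟨u, hu⟩ := (fproj F).map_surjective eX.hom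
    obtain ⟨y, hy⟩ := (fproj F).map_surjective eY.inv
    obtain ⟨M, g, f, hpo, hg⟩ := E.ex2op i' u ⟨Z', d', hc⟩
    have := (isPushout_fproj_map hF hE hpo ⟨Z', d', hc⟩ hg).isIso_inl_of_isIso
      (by rw [hu]; infer_instance)
    refine ⟨M, g, y ≫ f, hg, by rw [Functor.map_comp, hy]; infer_instance, ?_⟩
    have hi' : i ≫ eY.inv = eX.inv ≫ (fproj F).map i' := by
      rw [Iso.eq_inv_comp, ← reassoc_of% hi, Iso.hom_inv_id, Category.comp_id]
    rw [Functor.map_comp, hy, reassoc_of% hi', ← Functor.map_comp, hpo.w, Functor.map_comp, hu,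
      Iso.inv_hom_id_assoc]
  · rintro ⟨M, g, e, ⟨C, c, hc⟩, he, h⟩
    exact ⟨(fproj F).obj C, (fproj F).map e ≫ (fproj F).map c, X, M, C, g, c, hc, Iso.refl _,
      (asIso ((fproj F).map e)).symm, Iso.refl _, by simp [h], by simp⟩

theorem IsDeflationEF.comp (hF : FactorHyp E F) {X Y Z : FObj A F} {d : X ⟶ Y} {d' : Y ⟶ Z}
    (hd : IsDeflationEF E F d) (hd' : IsDeflationEF E F d') : IsDeflationEF E F (d ≫ d') := by
  obtain ⟨X, rfl⟩ := fproj_obj_surjective X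
  obtain ⟨Y, rfl⟩ := fproj_obj_surjective Y
  obtain ⟨Z, rfl⟩ := fproj_obj_surjective Z
  obtain ⟨M, g, e, hg, he, h⟩ := (isDeflationEF_iff hF d).1 hd
  obtain ⟨M', g', e', hg', he', h'⟩ := (isDeflationEF_iff hF d').1 hd'
  obtain ⟨N, q', q, hpb, hq'⟩ := E.ex2 g e' hg
  have := (isPullback_fproj_map hF hpb hq' hg).isIso_snd_of_isIso
  refine (isDeflationEF_iff hF _).2 ⟨N, q' ≫ g', q ≫ e, E.ex1 hq' hg',
    by rw [Functor.map_comp]; infer_instance, ?_⟩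
  rw [Functor.map_comp, h', ← Functor.map_comp_assoc, hpb.w, Functor.map_comp_assoc, h,
    Functor.map_comp, Category.assoc, Category.assoc]

theorem IsInflationEF.comp (hF : FactorHyp E F) (hE : E.IsFrobenius) {X Y Z : FObj A F}
    {i : X ⟶ Y} {i' : Y ⟶ Z} (hi : IsInflationEF E F i) (hi' : IsInflationEF E F i') :
    IsInflationEF E F (i ≫ i') := by
  obtain ⟨X, rfl⟩ := fproj_obj_surjective X
  obtain ⟨Y, rfl⟩ := fproj_obj_surjective Y
  obtain ⟨Z, rfl⟩ := fproj_obj_surjective Z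
  obtain ⟨M, g, e, hg, he, h⟩ := (isInflationEF_iff hF hE i).1 hi
  obtain ⟨M', g', e', hg', he', h'⟩ := (isInflationEF_iff hF hE i').1 hi'
  obtain ⟨N, q', q, hpo, hq'⟩ := E.ex2op g' e hg'
  have := (isPushout_fproj_map hF hE hpo hg' hq').isIso_inl_of_isIso
  refine (isInflationEF_iff hF hE _).2 ⟨N, g ≫ q', e' ≫ q, E.ex1op hg hq',
    by rw [Functor.map_comp]; infer_instance, ?_⟩
  rw [Functor.map_comp, h, Category.assoc, ← Functor.map_comp, ← hpo.w, Functor.map_comp,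
    reassoc_of% h', Functor.map_comp, Category.assoc]

theorem IsDeflationEF.exists_isPullback (hF : FactorHyp E F) {Y Z Z' : FObj A F} {d : Y ⟶ Z}
    (hd : IsDeflationEF E F d) (f : Z' ⟶ Z) :
    ∃ (Y' : FObj A F) (d' : Y' ⟶ Z') (f' : Y' ⟶ Y),
      IsPullback d' f' f d ∧ IsDeflationEF E F d' := by
  obtain ⟨Y, rfl⟩ := fproj_obj_surjective Y
  obtain ⟨Z, rfl⟩ := fproj_obj_surjective Z
  obtain ⟨Z', rfl⟩ := fproj_obj_surjective Z'
  obtain ⟨f, rfl⟩ := (fproj F).map_surjective f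
  obtain ⟨M, g, e, hg, he, h⟩ := (isDeflationEF_iff hF d).1 hd
  obtain ⟨N, d', f', hpb, ⟨K, k, hc⟩⟩ := E.ex2 g f hg
  refine ⟨(fproj F).obj N, (fproj F).map d', (fproj F).map f' ≫ (fproj F).map e, ?_,
    _, _, memEF_fproj_map hc⟩
  exact (isPullback_fproj_map hF hpb ⟨K, k, hc⟩ hg).of_iso (Iso.refl _) (Iso.refl _)
    (asIso ((fproj F).map e)) (Iso.refl _) (by simp) (by simp) (by simp) (by simp [h])

theorem IsInflationEF.exists_isPushout (hF : FactorHyp E F) (hE : E.IsFrobenius)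
    {X Y X' : FObj A F} {i : X ⟶ Y} (hi : IsInflationEF E F i) (f : X ⟶ X') :
    ∃ (Y' : FObj A F) (i' : X' ⟶ Y') (f' : Y ⟶ Y'),
      IsPushout i f f' i' ∧ IsInflationEF E F i' := by
  obtain ⟨X, rfl⟩ := fproj_obj_surjective X
  obtain ⟨Y, rfl⟩ := fproj_obj_surjective Y
  obtain ⟨X', rfl⟩ := fproj_obj_surjective X'
  obtain ⟨f, rfl⟩ := (fproj F).map_surjective f
  obtain ⟨M, g, e, hg, he, h⟩ := (isInflationEF_iff hF hE i).1 hi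
  obtain ⟨N, i', f', hpo, ⟨C, c, hc⟩⟩ := E.ex2op g f hg
  refine ⟨(fproj F).obj N, (fproj F).map i', (fproj F).map e ≫ (fproj F).map f', ?_,
    _, _, memEF_fproj_map hc⟩
  exact (isPushout_fproj_map hF hE hpo hg ⟨C, c, hc⟩).of_iso (Iso.refl _)
    (asIso ((fproj F).map e)).symm (Iso.refl _) (Iso.refl _) (by simp [h]) (by simp)
    (by simp) (by simp)

def factorExactStructure (hF : FactorHyp E F) (hE : E.IsFrobenius) :
    ExactStructure (FObj A F) where
  IsConflation := MemEF E F
  ker_of_conflation _ _ _ _ _ h := h.isKer hF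
  coker_of_conflation _ _ _ _ _ h := h.isCoker hF hE
  iso_closed _ _ _ _ _ _ _ _ _ _ eX eY eZ hi hd h := h.of_iso eX eY eZ hi hd
  ex0 _ hZ := hF.zero_mem.elim fun _ h => isDeflationEF_id_of_isZero h.2 hZ
  ex1 _ _ _ _ _ hd hd' := IsDeflationEF.comp hF hd hd'
  ex1op _ _ _ _ _ hi hi' := IsInflationEF.comp hF hE hi hi'
  ex2 _ _ _ _ f hd := IsDeflationEF.exists_isPullback hF hd f
  ex2op _ _ _ _ f hi := IsInflationEF.exists_isPushout hF hE hi f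

end FactorExactStructure

section Frobenius

variable {A : Type u} [Category.{v} A] [Preadditive A] [HasBinaryBiproducts A]
  {E : ExactStructure A} {F : Set A}

theorem proj_fproj_obj (hF : FactorHyp E F) (hE : E.IsFrobenius) {Q : A} (hQ : E.Proj Q) :
    (factorExactStructure hF hE).Proj ((fproj F).obj Q) := by
  intro Y d hd
  obtain ⟨Y, rfl⟩ := fproj_obj_surjective Y
  obtain ⟨M, g, e, hg, -, h⟩ := (isDeflationEF_iff hF d).1 hd
  obtain ⟨s, hs⟩ := hQ g hg
  exact ⟨(fproj F).map s ≫ (fproj F).map e,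
    by rw [Category.assoc, ← h, ← Functor.map_comp, hs, (fproj F).map_id]⟩

theorem inj_fproj_obj (hF : FactorHyp E F) (hE : E.IsFrobenius) {I : A} (hI : E.Inj I) :
    (factorExactStructure hF hE).Inj ((fproj F).obj I) := by
  intro Y i hi
  obtain ⟨Y, rfl⟩ := fproj_obj_surjective Y
  obtain ⟨M, g, e, hg, -, h⟩ := (isInflationEF_iff hF hE i).1 hi
  obtain ⟨r, hr⟩ := hI g hg
  exact ⟨(fproj F).map e ≫ (fproj F).map r,
    by rw [← Category.assoc, ← h, ← Functor.map_comp, hr, (fproj F).map_id]⟩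

theorem factorExactStructure_isFrobenius (hF : FactorHyp E F) (hE : E.IsFrobenius) :
    (factorExactStructure hF hE).IsFrobenius := by
  have proj_cover (X : A) : ∃ (Q : A) (q : Q ⟶ X), E.Proj Q ∧
      (factorExactStructure hF hE).IsDeflation ((fproj F).map q) := by
    obtain ⟨Q, q, hQ, K, k, hc⟩ := hE.enoughProj X
    exact ⟨Q, q, hQ, _, _, memEF_fproj_map hc⟩
  have inj_hull (X : A) : ∃ (I : A) (i : X ⟶ I), E.Inj I ∧
      (factorExactStructure hF hE).IsInflation ((fproj F).map i) := by
    obtain ⟨I, i, hI, C, c, hc⟩ := hE.enoughInj X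
    exact ⟨I, i, hI, _, _, memEF_fproj_map hc⟩
  refine ⟨fun X => ?_, fun X => ?_, fun X => ⟨fun hX => ?_, fun hX => ?_⟩⟩ <;>
    obtain ⟨X, rfl⟩ := fproj_obj_surjective X
  · obtain ⟨Q, q, hQ, hq⟩ := proj_cover X
    exact ⟨_, _, proj_fproj_obj hF hE hQ, hq⟩
  · obtain ⟨I, i, hI, hi⟩ := inj_hull X
    exact ⟨_, _, inj_fproj_obj hF hE hI, hi⟩
  · obtain ⟨Q, q, hQ, hq⟩ := proj_cover X
    obtain ⟨s, hs⟩ := hX _ hq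
    exact (inj_fproj_obj hF hE ((hE.proj_iff_inj Q).1 hQ)).of_retract s _ hs
  · obtain ⟨I, i, hI, hi⟩ := inj_hull X
    obtain ⟨r, hr⟩ := hX _ hi
    exact (proj_fproj_obj hF hE ((hE.proj_iff_inj I).2 hI)).of_retract _ r hr

end Frobenius

theorem factor_category_isFrobenius_general
    {A : Type u} [Category.{v} A] [Preadditive A] [HasBinaryBiproducts A]
    (E : ExactStructure A) (hE : E.IsFrobenius) (F : Set A) (hF : FactorHyp E F) :
    ∃ E' : ExactStructure (FObj A F),
      (∀ ⦃X Y Z : FObj A F⦄ (i : X ⟶ Y) (d : Y ⟶ Z),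
        E'.IsConflation i d ↔ MemEF E F i d) ∧
      E'.IsFrobenius :=
  ⟨factorExactStructure hF hE, fun _ _ _ _ _ => Iff.rfl, factorExactStructure_isFrobenius hF hE⟩

/-- **Theorem 1 (Theorem 3.1).** Let `(A, E)` be a Frobenius category and `F` a full
additive subcategory of the projective objects satisfying conditions (1) and (2).
Then the pair `(A/[F], E_F)` is a Frobenius category. -/
theorem factor_category_isFrobenius
    {A : Type u} [Category.{v} A] [Preadditive A] [HasZeroObject A] [HasBinaryBiproducts A]
    (E : ExactStructure A) (hE : E.IsFrobenius) (F : Set A) (hF : FactorHyp E F) :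
    ∃ E' : ExactStructure (FObj A F),
      (∀ ⦃X Y Z : FObj A F⦄ (i : X ⟶ Y) (d : Y ⟶ Z),
        E'.IsConflation i d ↔ MemEF E F i d) ∧
      E'.IsFrobenius :=
  factor_category_isFrobenius_general E hE F hF

end Paper
end

section
/- Let (A, E) be a Frobenius category with P its full subcategory of projective objects, and let F ⊆ P be a full additive subcategory satisfying conditions (1) and (2): every object A fits into a sequence A →(i_A) F_A →(p_A) P_A with i_A a left F-approximation, P_A ∈ P and p_A a pseudo-cokernel of i_A, and dually a sequence P^A →(i^A) F^A →(p^A) A with p^A a right F-approximation, P^A ∈ P and i^A a pseudo-kernel of p^A. Then an object of the Frobenius category (A/[F], E_F) is projective if and only if it is isomorphic in A/[F] to π(P) for some projective object P of A; the same objects are exactly the injective objects of (A/[F], E_F). -/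
universe v u

open CategoryTheory Limits

/-! A morphism of `A` that splits a deflation `e` onto `X` in `A/[F]` does so in `A` up to an
element of `[F](X, X)`. Every generator of `[F]` ending in `X` passes through a projective object
of `F` and so lifts along `e`, and the morphisms lifting along `e` form a subgroup; hence the error
term lifts too, and `X` is projective once `π X` is. Conversely every `E_F`-deflation is isomorphic
to the image of an `E`-deflation, along which a projective object of `A` lifts. Injectives are
dual, and in a Frobenius category both classes coincide. -/

namespace Paper

namespace ExactStructure

variable {A : Type u} [Category.{v} A] [Preadditive A] {E : ExactStructure A}

lemma Proj.lift {P Y Z : A} (hP : E.Proj P) {d : Y ⟶ Z} (hd : E.IsDeflation d) (u : P ⟶ Z) :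
    ∃ s : P ⟶ Y, s ≫ d = u := by
  obtain ⟨Y', d', u', pb, hd'⟩ := E.ex2 d u hd
  obtain ⟨t, ht⟩ := hP d' hd'
  exact ⟨t ≫ u', by rw [Category.assoc, ← pb.w, reassoc_of% ht]⟩

lemma Inj.extend {I X Y : A} (hI : E.Inj I) {i : X ⟶ Y} (hi : E.IsInflation i) (v : X ⟶ I) :
    ∃ r : Y ⟶ I, i ≫ r = v := by
  obtain ⟨Y', v', i', po, hi'⟩ := E.ex2op i v hi
  obtain ⟨r, hr⟩ := hI v' hi'
  exact ⟨i' ≫ r, by rw [← Category.assoc, po.w, Category.assoc, hr, Category.comp_id]⟩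

lemma Proj.of_iso {P Q : A} (hP : E.Proj P) (e : P ≅ Q) : E.Proj Q := by
  intro Y d hd
  obtain ⟨s, hs⟩ := hP.lift hd e.hom
  exact ⟨e.inv ≫ s, by rw [Category.assoc, hs, e.inv_hom_id]⟩

end ExactStructure

section FactorCategory

variable {A : Type u} [Category.{v} A] [Preadditive A] {F : Set A}

lemma fproj_map_surjective {X Y : A} (f : (fproj F).obj X ⟶ (fproj F).obj Y) :
    ∃ g : X ⟶ Y, (fproj F).map g = f :=
  QuotientAddGroup.mk_surjective f

lemma fproj_map_eq_iff {X Y : A} (f g : X ⟶ Y) :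
    (fproj F).map f = (fproj F).map g ↔ f - g ∈ fIdeal F X Y :=
  QuotientAddGroup.eq_iff_sub_mem

lemma fIdeal_le_range_rightComp {W X Y : A} (e : Y ⟶ X)
    (hlift : ∀ Z ∈ F, ∀ h : Z ⟶ X, ∃ l : Z ⟶ Y, l ≫ e = h) :
    fIdeal F W X ≤ (Preadditive.rightComp W e).range := by
  refine (AddSubgroup.closure_le _).2 ?_
  rintro _ ⟨Z, hZ, g, h, rfl⟩
  obtain ⟨l, hl⟩ := hlift Z hZ h
  exact ⟨g ≫ l, show (g ≫ l) ≫ e = g ≫ h by rw [Category.assoc, hl]⟩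

lemma fIdeal_le_range_leftComp {W X Y : A} (ι : X ⟶ Y)
    (hext : ∀ Z ∈ F, ∀ g : X ⟶ Z, ∃ m : Y ⟶ Z, ι ≫ m = g) :
    fIdeal F X W ≤ (Preadditive.leftComp W ι).range := by
  refine (AddSubgroup.closure_le _).2 ?_
  rintro _ ⟨Z, hZ, g, h, rfl⟩
  obtain ⟨m, hm⟩ := hext Z hZ g
  exact ⟨m ≫ h, show ι ≫ m ≫ h = g ≫ h by rw [reassoc_of% hm]⟩

variable {E : ExactStructure A} {E' : ExactStructure (FObj A F)}

lemma isConflation_fproj_map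
    (hEF : ∀ ⦃X Y Z : FObj A F⦄ (i : X ⟶ Y) (d : Y ⟶ Z), MemEF E F i d → E'.IsConflation i d)
    {X Y Z : A} {i : X ⟶ Y} {d : Y ⟶ Z} (hc : E.IsConflation i d) :
    E'.IsConflation ((fproj F).map i) ((fproj F).map d) :=
  hEF _ _ ⟨X, Y, Z, i, d, hc, Iso.refl _, Iso.refl _, Iso.refl _, by simp, by simp⟩

lemma isDeflation_fproj_map
    (hEF : ∀ ⦃X Y Z : FObj A F⦄ (i : X ⟶ Y) (d : Y ⟶ Z), MemEF E F i d → E'.IsConflation i d)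
    {Y Z : A} {d : Y ⟶ Z} (hd : E.IsDeflation d) : E'.IsDeflation ((fproj F).map d) :=
  let ⟨_, _, hc⟩ := hd
  ⟨_, _, isConflation_fproj_map hEF hc⟩

lemma isInflation_fproj_map
    (hEF : ∀ ⦃X Y Z : FObj A F⦄ (i : X ⟶ Y) (d : Y ⟶ Z), MemEF E F i d → E'.IsConflation i d)
    {X Y : A} {i : X ⟶ Y} (hi : E.IsInflation i) : E'.IsInflation ((fproj F).map i) :=
  let ⟨_, _, hc⟩ := hi
  ⟨_, _, isConflation_fproj_map hEF hc⟩

lemma proj_of_proj_fproj_obj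
    (hEF : ∀ ⦃X Y Z : FObj A F⦄ (i : X ⟶ Y) (d : Y ⟶ Z), MemEF E F i d → E'.IsConflation i d)
    (hFproj : ∀ P ∈ F, E.Proj P) {X : A} (hX : E'.Proj ((fproj F).obj X)) : E.Proj X := by
  intro Y e he
  obtain ⟨s, hs⟩ := hX _ (isDeflation_fproj_map hEF he)
  obtain ⟨σ, rfl⟩ := fproj_map_surjective s
  have hdefect : 𝟙 X - σ ≫ e ∈ fIdeal F X X := by
    rw [← fproj_map_eq_iff, Functor.map_comp, hs, (fproj F).map_id]
  obtain ⟨t, ht⟩ := fIdeal_le_range_rightComp e (fun Z hZ h => (hFproj Z hZ).lift he h) hdefect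
  refine ⟨σ + t, ?_⟩
  rw [Preadditive.add_comp, show t ≫ e = _ from ht, add_sub_cancel]

lemma inj_of_inj_fproj_obj
    (hEF : ∀ ⦃X Y Z : FObj A F⦄ (i : X ⟶ Y) (d : Y ⟶ Z), MemEF E F i d → E'.IsConflation i d)
    (hFinj : ∀ I ∈ F, E.Inj I) {X : A} (hX : E'.Inj ((fproj F).obj X)) : E.Inj X := by
  intro Y ι hι
  obtain ⟨ρ, hρ⟩ := hX _ (isInflation_fproj_map hEF hι)
  obtain ⟨r, rfl⟩ := fproj_map_surjective ρ
  have hdefect : 𝟙 X - ι ≫ r ∈ fIdeal F X X := by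
    rw [← fproj_map_eq_iff, Functor.map_comp, hρ, (fproj F).map_id]
  obtain ⟨t, ht⟩ := fIdeal_le_range_leftComp ι (fun Z hZ g => (hFinj Z hZ).extend hι g) hdefect
  refine ⟨r + t, ?_⟩
  rw [Preadditive.comp_add, show ι ≫ t = _ from ht, add_sub_cancel]

lemma proj_fproj_obj_of_proj
    (hEF : ∀ ⦃X Y Z : FObj A F⦄ (i : X ⟶ Y) (d : Y ⟶ Z), E'.IsConflation i d → MemEF E F i d)
    {P : A} (hP : E.Proj P) : E'.Proj ((fproj F).obj P) := by
  rintro Y'' d'' ⟨_, i'', hc''⟩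
  obtain ⟨_, _, Z, i, d, hc, -, eY, eZ, -, hd⟩ := hEF _ _ hc''
  obtain ⟨u, hu⟩ := fproj_map_surjective eZ.inv
  obtain ⟨s, hs⟩ := hP.lift ⟨_, i, hc⟩ u
  refine ⟨(fproj F).map s ≫ eY.hom, ?_⟩
  rw [Category.assoc, ← hd, ← Functor.map_comp_assoc, hs, hu, Iso.inv_hom_id]

lemma inj_fproj_obj_of_inj
    (hEF : ∀ ⦃X Y Z : FObj A F⦄ (i : X ⟶ Y) (d : Y ⟶ Z), E'.IsConflation i d → MemEF E F i d)
    {I : A} (hI : E.Inj I) : E'.Inj ((fproj F).obj I) := by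
  rintro Y'' i'' ⟨_, d'', hc''⟩
  obtain ⟨X, Y, _, i, d, hc, eX, eY, -, hi, -⟩ := hEF _ _ hc''
  obtain ⟨v, hv⟩ := fproj_map_surjective eX.hom
  obtain ⟨r, hr⟩ := hI.extend ⟨_, d, hc⟩ v
  refine ⟨eY.inv ≫ (fproj F).map r, ?_⟩
  rw [← cancel_epi eX.hom, ← reassoc_of% hi, eY.hom_inv_id_assoc, ← Functor.map_comp, hr, hv,
    Category.comp_id]

lemma proj_fproj_obj_iff
    (hE' : ∀ ⦃X Y Z : FObj A F⦄ (i : X ⟶ Y) (d : Y ⟶ Z), E'.IsConflation i d ↔ MemEF E F i d)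
    (hFproj : ∀ P ∈ F, E.Proj P) {X : A} : E'.Proj ((fproj F).obj X) ↔ E.Proj X :=
  ⟨proj_of_proj_fproj_obj (fun _ _ _ i d => (hE' i d).2) hFproj,
    proj_fproj_obj_of_proj (fun _ _ _ i d => (hE' i d).1)⟩

lemma inj_fproj_obj_iff
    (hE' : ∀ ⦃X Y Z : FObj A F⦄ (i : X ⟶ Y) (d : Y ⟶ Z), E'.IsConflation i d ↔ MemEF E F i d)
    (hFinj : ∀ I ∈ F, E.Inj I) {X : A} : E'.Inj ((fproj F).obj X) ↔ E.Inj X :=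
  ⟨inj_of_inj_fproj_obj (fun _ _ _ i d => (hE' i d).2) hFinj,
    inj_fproj_obj_of_inj (fun _ _ _ i d => (hE' i d).1)⟩

end FactorCategory

theorem factor_category_projectives_general
    {A : Type u} [Category.{v} A] [Preadditive A] [HasBinaryBiproducts A]
    (E : ExactStructure A) (hE : E.IsFrobenius) (F : Set A) (hF : FactorHyp E F)
    (E' : ExactStructure (FObj A F))
    (hE' : ∀ ⦃X Y Z : FObj A F⦄ (i : X ⟶ Y) (d : Y ⟶ Z),
      E'.IsConflation i d ↔ MemEF E F i d) :
    ∀ X : FObj A F,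
      (E'.Proj X ↔ ∃ P : A, E.Proj P ∧ Nonempty ((fproj F).obj P ≅ X)) ∧
      (E'.Inj X ↔ ∃ P : A, E.Proj P ∧ Nonempty ((fproj F).obj P ≅ X)) := by
  intro X
  have hproj : E'.Proj X ↔ E.Proj X.obj := proj_fproj_obj_iff hE' hF.proj
  have hinj : E'.Inj X ↔ E.Proj X.obj :=
    (inj_fproj_obj_iff hE' fun I hI => (hE.proj_iff_inj I).1 (hF.proj I hI)).trans
      (hE.proj_iff_inj X.obj).symm
  have hrep : (∃ P : A, E.Proj P ∧ Nonempty ((fproj F).obj P ≅ X)) ↔ E.Proj X.obj :=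
    ⟨fun ⟨_, hP, ⟨e⟩⟩ => hproj.1 (((proj_fproj_obj_iff hE' hF.proj).2 hP).of_iso e),
      fun hX => ⟨X.obj, hX, ⟨Iso.refl X⟩⟩⟩
  exact ⟨hproj.trans hrep.symm, hinj.trans hrep.symm⟩

/-- **Theorem 3 (Step 3 / Remark in Section 3).** Under the hypotheses of Theorem 3.1,
an object of the Frobenius category `(A/[F], E_F)` is projective if and only if it is
isomorphic to `π(P)` for a projective object `P` of `A`, and the same objects are
exactly the injective objects of `(A/[F], E_F)`. -/
theorem factor_category_projectives
    {A : Type u} [Category.{v} A] [Preadditive A] [HasZeroObject A] [HasBinaryBiproducts A]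
    (E : ExactStructure A) (hE : E.IsFrobenius) (F : Set A) (hF : FactorHyp E F)
    (E' : ExactStructure (FObj A F))
    (hE' : ∀ ⦃X Y Z : FObj A F⦄ (i : X ⟶ Y) (d : Y ⟶ Z),
      E'.IsConflation i d ↔ MemEF E F i d) :
    ∀ X : FObj A F,
      (E'.Proj X ↔ ∃ P : A, E.Proj P ∧ Nonempty ((fproj F).obj P ≅ X)) ∧
      (E'.Inj X ↔ ∃ P : A, E.Proj P ∧ Nonempty ((fproj F).obj P ≅ X)) :=
  factor_category_projectives_general E hE F hF E' hE'

end Paper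
end

section
/- Let A be a Frobenius category and P its full subcategory of projective objects. Given objects X, Y of A and a short exact sequence 0 → h_X → M → h_Y → 0 in Mod P in which M is a Cohen-Macaulay P-module, the module M is isomorphic to h_Z for some object Z of A. In other words, the essential image of the restricted Yoneda functor h: A → Mod P is closed under extensions inside CM(P). -/
universe v u

open CategoryTheory Limits

namespace Paper

open CategoryTheory Limits

section Modules

variable (C : Type u) [Category.{v} C] [Preadditive C]

/-- The category `Mod C` of (additive) contravariant functors from `C` to abelian
groups; a Cohen-Macaulay module is automatically additive, so we work in the ambient
functor category, which has the same Hom-groups. -/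
abbrev ModC := Cᵒᵖ ⥤ AddCommGrpCat.{v}

/-- A `C`-module is finitely generated projective iff it is a direct summand of a
representable module `H_X = Hom_C(-, X)`. -/
def IsFGProj (M : ModC C) : Prop :=
  ∃ (X : C) (s : M ⟶ preadditiveYoneda.obj X) (r : preadditiveYoneda.obj X ⟶ M),
    s ≫ r = 𝟙 M

/-- `0 ⟶ L ⟶u M ⟶v N ⟶ 0` is a short exact sequence of `C`-modules
(exactness is objectwise). -/
def IsSES {L M N : ModC C} (u : L ⟶ M) (v : M ⟶ N) : Prop :=
  ∀ c : Cᵒᵖ, Function.Injective (u.app c) ∧ Function.Surjective (v.app c) ∧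
    ∀ x : M.obj c, (v.app c) x = 0 ↔ ∃ y : L.obj c, (u.app c) y = x

/-- A totally acyclic complex: an acyclic complex of finitely generated projective
`C`-modules such that `Hom(P^•, H_X)` is acyclic for every object `X` of `C`. -/
structure IsTotallyAcyclic (P : ℤ → ModC C) (d : ∀ n : ℤ, P n ⟶ P (n + 1)) : Prop where
  fgProj : ∀ n, IsFGProj C (P n)
  comp_zero : ∀ n, d n ≫ d (n + 1) = 0
  acyclic : ∀ (n : ℤ) (c : Cᵒᵖ) (x : (P (n + 1)).obj c),
    ((d (n + 1)).app c) x = 0 → ∃ y : (P n).obj c, ((d n).app c) y = x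
  hom_acyclic : ∀ (n : ℤ) (X : C) (g : P (n + 1) ⟶ preadditiveYoneda.obj X),
    d n ≫ g = 0 → ∃ h : P (n + 1 + 1) ⟶ preadditiveYoneda.obj X, d (n + 1) ≫ h = g

/-- A `C`-module is (maximal) Cohen-Macaulay iff it is isomorphic to the `0`-th
cocycle `Z^0(P^•)` (i.e. the kernel of `d^0`) of some totally acyclic complex. -/
def IsCM (M : ModC C) : Prop :=
  ∃ (P : ℤ → ModC C) (d : ∀ n : ℤ, P n ⟶ P (n + 1)), IsTotallyAcyclic C P d ∧
    ∃ ι : M ⟶ P 0, ι ≫ d 0 = 0 ∧ ∀ c : Cᵒᵖ,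
      Function.Injective (ι.app c) ∧
      ∀ x : (P 0).obj c, ((d 0).app c) x = 0 → ∃ m : M.obj c, (ι.app c) m = x

end Modules

section ResYoneda

variable {A : Type u} [Category.{v} A] [Preadditive A]

/-- The full subcategory `P` of projective objects of `(A, E)`. -/
abbrev ProjCat (E : ExactStructure A) := ObjectProperty.FullSubcategory (fun P : A => E.Proj P)

/-- The restricted Yoneda functor `h : A ⥤ Mod P`, sending `X` to
`h_X = Hom_A(-, X)|_P`. -/
def resYoneda (E : ExactStructure A) : A ⥤ ModC (ProjCat E) :=
  preadditiveYoneda ⋙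
    (Functor.whiskeringLeft (ProjCat E)ᵒᵖ Aᵒᵖ AddCommGrpCat.{v}).obj (ObjectProperty.ι _).op

end ResYoneda

end Paper
namespace Paper

open CategoryTheory Limits

/-!
Choose a conflation `K →i Q →p Y` with `Q` projective. As a Cohen–Macaulay module, `M` is a
subfunctor of an additive functor, hence additive, and the additive Yoneda lemma lifts `h_p`
along the pointwise surjection `v` to some `t : h_Q ⟶ M`. Then `-(h_i ≫ t)` is killed by `v`,
so it factors through `u`, and since `h` is full (enough projectives) the factorisation is `h_g`
for some `g : K ⟶ X`. The morphism `(g, i) : K ⟶ X ⊞ Q` is an inflation; if `Z` is its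
cokernel, then both `h_Z` and `M` (through `[u, t] : h_{X ⊞ Q} ⟶ M`) are cokernels of
`h_{(g, i)}` in `Mod P`, so `M ≅ h_Z`.
-/

section Preadditive

variable {A : Type u} [Category.{v} A] [Preadditive A]

lemma IsKer.isZero_of_mono {X Y Z : A} {i : X ⟶ Y} {d : Y ⟶ Z} (h : IsKer i d) [Mono d] :
    IsZero X := by
  have hi : i = 0 := by rw [← cancel_mono d, h.1, zero_comp]
  obtain ⟨_, -, huniq⟩ := h.2 i (by rw [h.1])
  rw [IsZero.iff_id_eq_zero, huniq (𝟙 X) (Category.id_comp i), huniq 0 (by simp [hi])]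

lemma isPushout_biprod_lift [HasBinaryBiproducts A] {K Q X : A} (i : K ⟶ Q) (g : K ⟶ X) :
    IsPushout i (biprod.lift (-g) (𝟙 K)) biprod.inr
      (biprod.desc biprod.inl (biprod.lift g i)) := by
  refine IsPushout.of_isColimit' ⟨by ext <;> simp⟩ (PushoutCocone.IsColimit.mk _
    (fun s => biprod.desc (biprod.inl ≫ s.inr) s.inl) (fun s => by simp) (fun s => ?_)
    (fun s m h₁ h₂ => ?_))
  · have hs : i ≫ s.inl = biprod.lift (-g) (𝟙 K) ≫ s.inr := s.condition
    have hinr : g ≫ biprod.inl + biprod.lift (-g) (𝟙 K) = (biprod.inr : K ⟶ X ⊞ K) := by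
      ext <;> simp
    ext
    · simp
    · simp [hs, ← reassoc_of% hinr]
  · ext
    · simpa using congrArg (biprod.inl ≫ ·) h₂
    · simpa using h₁

end Preadditive

namespace ExactStructure

open ZeroObject

variable {A : Type u} [Category.{v} A] [Preadditive A] (E : ExactStructure A)

lemma epi_of_isDeflation {Y Z : A} {d : Y ⟶ Z} (hd : E.IsDeflation d) : Epi d := by
  obtain ⟨X, i, hid⟩ := hd
  obtain ⟨hzero, hdesc⟩ := E.coker_of_conflation hid
  refine ⟨fun g g' hgg' => ?_⟩
  obtain ⟨_, -, huniq⟩ := hdesc (d ≫ g) (by rw [← Category.assoc, hzero, zero_comp])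
  exact (huniq g rfl).trans (huniq g' hgg'.symm).symm

lemma exists_lift_of_proj {P Y Z : A} (hP : E.Proj P) {d : Y ⟶ Z} (hd : E.IsDeflation d)
    (s : P ⟶ Z) : ∃ s' : P ⟶ Y, s' ≫ d = s := by
  obtain ⟨Y', d', f', hpb, hd'⟩ := E.ex2 d s hd
  obtain ⟨σ, hσ⟩ := hP d' hd'
  exact ⟨σ ≫ f', by rw [Category.assoc, ← hpb.w, reassoc_of% hσ]⟩

lemma isConflation_zero_id [HasZeroObject A] (X : A) : E.IsConflation (0 : 0 ⟶ X) (𝟙 X) := by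
  obtain ⟨W₀, i₀, h₀⟩ := E.ex0 (isZero_zero A)
  obtain ⟨Y, d, f, hpb, W, i, hid⟩ := E.ex2 (𝟙 0) (0 : X ⟶ 0) ⟨W₀, i₀, h₀⟩
  have : IsIso d := hpb.isIso_fst_of_isIso
  have hW : IsZero W := (E.ker_of_conflation hid).isZero_of_mono
  exact E.iso_closed hW.isoZero (asIso d) (Iso.refl X) (by simp [(E.ker_of_conflation hid).1])
    (by simp) hid

lemma isInflation_of_isPushout {K Q S T : A} {i : K ⟶ Q} (hi : E.IsInflation i) {f : K ⟶ S}
    {b : Q ⟶ T} {a : S ⟶ T} (hpo : IsPushout i f b a) : E.IsInflation a := by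
  obtain ⟨Y, i', f', hpo', Z, d, hd⟩ := E.ex2op i f hi
  let e : Y ≅ T := hpo'.isoIsPushout _ _ hpo
  exact ⟨Z, e.inv ≫ d, E.iso_closed (Iso.refl S) e (Iso.refl Z) (by simp [e]) (by simp) hd⟩

lemma isInflation_inr [HasZeroObject A] [HasBinaryBiproducts A] (X K : A) :
    E.IsInflation (biprod.inr : K ⟶ X ⊞ K) :=
  E.isInflation_of_isPushout ⟨X, 𝟙 X, E.isConflation_zero_id X⟩
    (IsPushout.of_has_biproduct X K)

lemma isInflation_biprod_lift [HasZeroObject A] [HasBinaryBiproducts A] {K Q X : A}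
    {i : K ⟶ Q} (hi : E.IsInflation i) (g : K ⟶ X) : E.IsInflation (biprod.lift g i) := by
  -- `(g, i)` is `inr : K ⟶ X ⊞ K` followed by the pushout of `i` along `(-g, 1)`
  simpa [IsInflation] using E.ex1op (E.isInflation_inr X K)
    (E.isInflation_of_isPushout hi (isPushout_biprod_lift i g))

end ExactStructure

lemma _root_.CategoryTheory.Functor.additive_of_injective_app {C : Type*} [Category C]
    [Preadditive C] {M N : C ⥤ AddCommGrpCat.{v}} (ι : M ⟶ N)
    (hι : ∀ c, Function.Injective (ι.app c)) [N.Additive] : M.Additive where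
  map_add {c c' f f'} := by
    ext x
    apply hι c'
    simp [NatTrans.naturality_apply, N.map_add]

lemma _root_.CategoryTheory.ShortComplex.exact_of_forall_app {C : Type*} [Category C]
    (S : ShortComplex (C ⥤ AddCommGrpCat.{v}))
    (h : ∀ c (x : S.X₂.obj c), S.g.app c x = 0 → ∃ y, S.f.app c y = x) : S.Exact := by
  rw [ShortComplex.exact_iff_isZero_homology, Functor.isZero_iff]
  intro c
  exact ((S.map ((evaluation _ _).obj c)).exact_iff_isZero_homology.1
    ((S.map ((evaluation _ _).obj c)).ab_exact_iff.2 (h c))).of_iso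
      (S.mapHomologyIso ((evaluation _ _).obj c)).symm

section Modules

variable {C : Type u} [Category.{v} C]

lemma IsFGProj.additive [Preadditive C] {M : ModC C} (hM : IsFGProj C M) : M.Additive := by
  obtain ⟨X, s, r, hsr⟩ := hM
  exact Functor.additive_of_injective_app s fun c => Function.LeftInverse.injective
    (g := r.app c) fun x => by simpa using congrArg (fun φ : M ⟶ M => φ.app c x) hsr

lemma IsCM.additive [Preadditive C] {M : ModC C} (hM : IsCM C M) : M.Additive := by
  obtain ⟨P, d, hP, ι, -, hι⟩ := hM
  have := (hP.fgProj 0).additive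
  exact Functor.additive_of_injective_app ι fun c => (hι c).1

variable {L M N : ModC C} {u : L ⟶ M} {v : M ⟶ N}

lemma IsSES.comp_eq_zero (h : IsSES C u v) : u ≫ v = 0 := by
  ext c x
  exact ((h c).2.2 (u.app c x)).2 ⟨x, rfl⟩

lemma IsSES.shortExact (h : IsSES C u v) : (ShortComplex.mk u v h.comp_eq_zero).ShortExact where
  exact := ShortComplex.exact_of_forall_app _ fun c x hx => ((h c).2.2 x).1 hx
  mono_f := by
    have (c : Cᵒᵖ) : Mono (u.app c) := (AddCommGrpCat.mono_iff_injective _).2 (h c).1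
    exact NatTrans.mono_of_mono_app u
  epi_g := by
    have (c : Cᵒᵖ) : Epi (v.app c) := (AddCommGrpCat.epi_iff_surjective _).2 (h c).2.1
    exact NatTrans.epi_of_epi_app v

end Modules

section ResYoneda

variable {A : Type u} [Category.{v} A] [Preadditive A] (E : ExactStructure A)

instance additive_resYoneda : (resYoneda E).Additive where
  map_add {_ _ f f'} := by
    ext c (s : c.unop.obj ⟶ _)
    exact Preadditive.comp_add _ _ _ s f f'

lemma resYoneda_map_app_surjective {W Z : A} {d : W ⟶ Z} (hd : E.IsDeflation d)
    (c : (ProjCat E)ᵒᵖ) : Function.Surjective (((resYoneda E).map d).app c) :=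
  E.exists_lift_of_proj c.unop.property hd

lemma resYoneda_hom_app_comp {K X : A} (ψ : (resYoneda E).obj K ⟶ (resYoneda E).obj X)
    {P P' : ProjCat E} (a : P.obj ⟶ P'.obj) (s : P'.obj ⟶ K) :
    ψ.app (Opposite.op P) (a ≫ s) = a ≫ ψ.app (Opposite.op P') s :=
  NatTrans.naturality_apply ψ (ObjectProperty.homMk a).op s

lemma full_resYoneda (hE : E.EnoughProj) : (resYoneda E).Full where
  map_surjective {K X} ψ := by
    obtain ⟨R, q, hR, L, k, hkq⟩ := hE K
    obtain ⟨R', r, hR', hr⟩ := hE L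
    let g₀ : R ⟶ X := ψ.app (Opposite.op ⟨R, hR⟩) q
    have hrk : (r ≫ k) ≫ g₀ = 0 := by
      rw [← resYoneda_hom_app_comp E ψ (P := ⟨R', hR'⟩) (P' := ⟨R, hR⟩), Category.assoc,
        (E.ker_of_conflation hkq).1, comp_zero]
      exact map_zero _
    have hk : k ≫ g₀ = 0 := by
      have := E.epi_of_isDeflation hr
      rw [← cancel_epi r, ← Category.assoc, hrk, comp_zero]
    obtain ⟨g, hg, -⟩ := (E.coker_of_conflation hkq).2 g₀ hk
    refine ⟨g, ?_⟩
    ext c (s : c.unop.obj ⟶ K)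
    obtain ⟨s', rfl⟩ := E.exists_lift_of_proj c.unop.property ⟨L, k, hkq⟩ s
    change (s' ≫ q) ≫ g = ψ.app (Opposite.op c.unop) (s' ≫ q)
    rw [resYoneda_hom_app_comp E ψ (P' := ⟨R, hR⟩), Category.assoc, hg]

def resYonedaHomOfElem (M : ModC (ProjCat E)) [M.Additive] (Q : ProjCat E)
    (m : M.obj (Opposite.op Q)) : (resYoneda E).obj Q.obj ⟶ M where
  app c := AddCommGrpCat.ofHom
    { toFun := fun s => M.map (ObjectProperty.homMk s).op m
      map_zero' := by
        show M.map 0 m = 0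
        simp
      map_add' := fun s s' => by
        show M.map ((ObjectProperty.homMk s).op + (ObjectProperty.homMk s').op) m = _
        simp }
  naturality c c' φ := by
    ext s
    show M.map (ObjectProperty.homMk (φ.unop.hom ≫ s)).op m = M.map φ (M.map _ m)
    rw [← ConcreteCategory.comp_apply, ← M.map_comp]
    rfl

lemma exists_lift_resYoneda_obj {M N : ModC (ProjCat E)} [M.Additive] (v : M ⟶ N)
    (Q : ProjCat E) (hv : Function.Surjective (v.app (Opposite.op Q)))
    (f : (resYoneda E).obj Q.obj ⟶ N) : ∃ t, t ≫ v = f := by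
  let idQ : ((resYoneda E).obj Q.obj).obj (Opposite.op Q) := 𝟙 Q.obj
  obtain ⟨m, hm⟩ := hv (f.app _ idQ)
  refine ⟨resYonedaHomOfElem E M Q m, ?_⟩
  ext c (s : c.unop.obj ⟶ Q.obj)
  let φ : Opposite.op Q ⟶ c := (ObjectProperty.homMk s).op
  calc v.app c (M.map φ m) = N.map φ (v.app _ m) := NatTrans.naturality_apply v φ m
    _ = f.app c (((resYoneda E).obj Q.obj).map φ idQ) := by
      rw [hm, NatTrans.naturality_apply]
    _ = f.app c s := congrArg (f.app c) (Category.comp_id s)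

lemma nonempty_iso_resYoneda_of_isConflation {K W Z : A} {j : K ⟶ W} {d : W ⟶ Z}
    (hjd : E.IsConflation j d) {M : ModC (ProjCat E)} (w : (resYoneda E).obj W ⟶ M)
    (hjw : (resYoneda E).map j ≫ w = 0) (hw : ∀ c, Function.Surjective (w.app c))
    (hker : ∀ c (s : c.unop.obj ⟶ W), w.app c s = 0 → ∃ k, k ≫ j = s) :
    Nonempty (M ≅ (resYoneda E).obj Z) := by
  have hjd₀ : (resYoneda E).map j ≫ (resYoneda E).map d = 0 := by
    rw [← Functor.map_comp, (E.ker_of_conflation hjd).1, Functor.map_zero]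
  have : Epi ((resYoneda E).map d) := by
    have (c : (ProjCat E)ᵒᵖ) : Epi (((resYoneda E).map d).app c) :=
      (AddCommGrpCat.epi_iff_surjective _).2 (resYoneda_map_app_surjective E ⟨K, j, hjd⟩ c)
    exact NatTrans.epi_of_epi_app _
  have : Epi w := by
    have (c : (ProjCat E)ᵒᵖ) : Epi (w.app c) := (AddCommGrpCat.epi_iff_surjective _).2 (hw c)
    exact NatTrans.epi_of_epi_app _
  have hZ := ShortComplex.exact_of_forall_app (.mk _ _ hjd₀)
    fun c (s : c.unop.obj ⟶ W) hs => (E.ker_of_conflation hjd).2 s hs |>.exists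
  have hM := ShortComplex.exact_of_forall_app (.mk _ _ hjw) hker
  exact ⟨hM.gIsCokernel.coconePointUniqueUpToIso hZ.gIsCokernel⟩

end ResYoneda

section BiprodDesc

variable {A : Type u} [Category.{v} A] [Preadditive A] [HasBinaryBiproducts A]
  {E : ExactStructure A} {X Q : A} {M : ModC (ProjCat E)}

variable (E) in
noncomputable def resYonedaBiprodDesc (u : (resYoneda E).obj X ⟶ M)
    (t : (resYoneda E).obj Q ⟶ M) : (resYoneda E).obj (X ⊞ Q) ⟶ M :=
  (resYoneda E).map biprod.fst ≫ u + (resYoneda E).map biprod.snd ≫ t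

lemma resYonedaBiprodDesc_app_apply (u : (resYoneda E).obj X ⟶ M)
    (t : (resYoneda E).obj Q ⟶ M) (c : (ProjCat E)ᵒᵖ) (s : c.unop.obj ⟶ X ⊞ Q) :
    (resYonedaBiprodDesc E u t).app c s = u.app c (s ≫ biprod.fst) + t.app c (s ≫ biprod.snd) :=
  rfl

variable {Y K : A} {u : (resYoneda E).obj X ⟶ M} {v : M ⟶ (resYoneda E).obj Y}
  {t : (resYoneda E).obj Q ⟶ M} {p : Q ⟶ Y}

lemma surjective_resYonedaBiprodDesc_app (huv : IsSES (ProjCat E) u v) (hp : E.IsDeflation p)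
    (htv : t ≫ v = (resYoneda E).map p) (c : (ProjCat E)ᵒᵖ) :
    Function.Surjective ((resYonedaBiprodDesc E u t).app c) := by
  have htv' (y) : v.app c (t.app c y) = ((resYoneda E).map p).app c y :=
    ConcreteCategory.congr_hom (NatTrans.congr_app htv c) y
  intro m
  obtain ⟨s, hs⟩ := resYoneda_map_app_surjective E hp c (v.app c m)
  obtain ⟨a, ha⟩ := ((huv c).2.2 (m - t.app c s)).1 (by rw [map_sub, htv', hs, sub_self])
  refine ⟨biprod.lift a s, ?_⟩
  have h₁ : biprod.lift a s ≫ biprod.fst = a := biprod.lift_fst _ _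
  have h₂ : biprod.lift a s ≫ biprod.snd = s := biprod.lift_snd _ _
  rw [resYonedaBiprodDesc_app_apply, h₁, h₂, ha, sub_add_cancel]

lemma exists_comp_biprod_lift_of_resYonedaBiprodDesc_app_eq_zero {i : K ⟶ Q} {g : K ⟶ X}
    (huv : IsSES (ProjCat E) u v) (hip : E.IsConflation i p) (htv : t ≫ v = (resYoneda E).map p)
    (hgu : (resYoneda E).map g ≫ u = -((resYoneda E).map i ≫ t)) (c : (ProjCat E)ᵒᵖ)
    (s : c.unop.obj ⟶ X ⊞ Q) (hs : (resYonedaBiprodDesc E u t).app c s = 0) :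
    ∃ k : c.unop.obj ⟶ K, k ≫ biprod.lift g i = s := by
  have hvu (x) : v.app c (u.app c x) = 0 := ((huv c).2.2 _).2 ⟨x, rfl⟩
  have htv' (y) : v.app c (t.app c y) = ((resYoneda E).map p).app c y :=
    ConcreteCategory.congr_hom (NatTrans.congr_app htv c) y
  have hgu' (x : c.unop.obj ⟶ K) : u.app c (x ≫ g) = -t.app c (x ≫ i) :=
    ConcreteCategory.congr_hom (NatTrans.congr_app hgu c) x
  rw [resYonedaBiprodDesc_app_apply] at hs
  have hsp : (s ≫ biprod.snd) ≫ p = 0 := by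
    have := congrArg (v.app c) hs
    rwa [map_add, hvu (s ≫ biprod.fst), zero_add, htv' (s ≫ biprod.snd), map_zero] at this
  obtain ⟨k, hk, -⟩ := (E.ker_of_conflation hip).2 _ hsp
  have hkg : k ≫ g = s ≫ biprod.fst := (huv c).1 (by
    rw [hgu' k, hk]
    exact neg_eq_of_add_eq_zero_left hs)
  exact ⟨k, by ext <;> simp [hkg, hk]⟩

end BiprodDesc

/-- **Theorem (Step 3 of Theorem 4.2).** For a Frobenius category `A`, the essential
image of the restricted Yoneda functor `h : A ⥤ Mod P` is closed under extensions
inside the Cohen-Macaulay modules: if `0 → h_X → M → h_Y → 0` is a short exact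
sequence of `P`-modules with `M` Cohen-Macaulay, then `M ≅ h_Z` for some `Z` in `A`. -/
theorem resYoneda_essImage_extension_closed
    {A : Type u} [Category.{v} A] [Preadditive A] [HasZeroObject A] [HasBinaryBiproducts A]
    (E : ExactStructure A) (hE : E.IsFrobenius) (X Y : A) (M : ModC (ProjCat E))
    (hM : IsCM (ProjCat E) M)
    (u : (resYoneda E).obj X ⟶ M) (v : M ⟶ (resYoneda E).obj Y)
    (huv : IsSES (ProjCat E) u v) :
    ∃ Z : A, Nonempty (M ≅ (resYoneda E).obj Z) := by
  have := hM.additive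
  obtain ⟨Q, p, hQ, K, i, hip⟩ := hE.enoughProj Y
  obtain ⟨t, htv⟩ := exists_lift_resYoneda_obj E v ⟨Q, hQ⟩ (huv _).2.1 ((resYoneda E).map p)
  obtain ⟨ψ, hψ⟩ := KernelFork.IsLimit.lift' huv.shortExact.fIsKernel
    (-((resYoneda E).map i ≫ t)) (by
      rw [Preadditive.neg_comp, Category.assoc, htv, ← Functor.map_comp,
        (E.ker_of_conflation hip).1, Functor.map_zero, neg_zero])
  obtain ⟨g, rfl⟩ := (full_resYoneda E hE.enoughProj).map_surjective ψ
  replace hψ : (resYoneda E).map g ≫ u = -((resYoneda E).map i ≫ t) := hψ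
  obtain ⟨Z, d, hZ⟩ := E.isInflation_biprod_lift ⟨Y, p, hip⟩ g
  refine ⟨Z, nonempty_iso_resYoneda_of_isConflation E hZ (resYonedaBiprodDesc E u t) ?_
    (surjective_resYonedaBiprodDesc_app huv ⟨K, i, hip⟩ htv)
    (exists_comp_biprod_lift_of_resYonedaBiprodDesc_app_eq_zero huv hip htv hψ)⟩
  simp [resYonedaBiprodDesc, ← Functor.map_comp_assoc, hψ]

end Paper
end

section
/- Let A be a Frobenius category and P its full subcategory of projective objects. If X →i Y →d Z is a composable pair in A such that the induced sequence 0 → h_X →(h(i)) h_Y →(h(d)) h_Z → 0 is a short exact sequence in Mod P, then (i, d) is a conflation of A. That is, the restricted Yoneda functor h reflects exactness. -/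
universe v u

open CategoryTheory Limits

namespace Paper

open CategoryTheory Limits

/-!
Testing against projectives (enough of them, and deflations are epimorphisms) shows that `i` is
a kernel of `d`, and that a projective deflation `p : Q ⟶ Z` lifts to `q : Q ⟶ Y` with
`q ≫ d = p`. The rest is Keller's "obscure axiom": if `i` is a kernel of `d` and some `q ≫ d`
is a deflation, then `(i, d)` is a conflation. Indeed `[q ≫ d, d] = (p ⊕ 1) ≫ [1, d]` is a
deflation (a pullback of `p` followed by a shear of the split deflation), hence so is its shear
`[0, d] : Q ⊞ Y ⟶ Z`, whose kernel is `Q ⊞ i`. Pushing this inflation out along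
`Q ⊞ X ⟶ X` yields `i`, and the cokernel `d` of `i` is inherited from that of `Q ⊞ i`.
-/

section KernelCokernel

variable {A : Type u} [Category.{v} A] [Preadditive A] {X Y Z : A} {i : X ⟶ Y} {d : Y ⟶ Z}

theorem IsKer.mono_s7 (h : IsKer i d) : Mono i where
  right_cancellation a b hab := by
    obtain ⟨_, -, huniq⟩ := h.2 (b ≫ i) (by rw [Category.assoc, h.1, comp_zero])
    exact (huniq a hab).trans (huniq b rfl).symm

theorem IsCoker.epi_s7 (h : IsCoker i d) : Epi d where
  left_cancellation a b hab := by
    obtain ⟨_, -, huniq⟩ := h.2 (d ≫ b) (by rw [← Category.assoc, h.1, zero_comp])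
    exact (huniq a hab).trans (huniq b rfl).symm

variable [HasBinaryBiproducts A]

theorem IsKer.biprod_map (h : IsKer i d) (Q : A) :
    IsKer (biprod.map (𝟙 Q) i) (biprod.snd ≫ d) := by
  refine ⟨by simp [h.1], fun W g hg => ?_⟩
  obtain ⟨g₂, hg₂, -⟩ := h.2 (g ≫ biprod.snd) (by rwa [Category.assoc])
  have := h.mono_s7
  refine ⟨biprod.lift (g ≫ biprod.fst) g₂, by ext <;> simp [hg₂], fun y hy => ?_⟩
  subst hy
  ext
  · simp
  · simp [← cancel_mono i, hg₂]

theorem IsCoker.of_biprod_map {Q : A} (h : IsCoker (biprod.map (𝟙 Q) i) (biprod.snd ≫ d)) :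
    IsCoker i d := by
  have hid : i ≫ d = 0 := by simpa using biprod.inr ≫= h.1
  refine ⟨hid, fun W g hg => ?_⟩
  obtain ⟨g', hg', -⟩ := h.2 (biprod.snd ≫ g) (by simp [hg])
  have := h.epi_s7
  refine ⟨g', by simpa using biprod.inr ≫= hg', fun y hy => ?_⟩
  rw [← cancel_epi (biprod.snd ≫ d : Q ⊞ Y ⟶ Z), Category.assoc, hy, hg']

theorem isPushout_biprod_map_snd (Q : A) (i : X ⟶ Y) :
    IsPushout (biprod.map (𝟙 Q) i) biprod.snd biprod.snd i := by
  refine ⟨⟨by simp⟩,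
    ⟨PushoutCocone.IsColimit.mk _ (fun s => biprod.inr ≫ s.inl) ?_ ?_ ?_⟩⟩
  · intro s
    ext
    · simpa using (biprod.inl ≫= s.condition).symm
    · simp
  · intro s
    simpa using biprod.inr ≫= s.condition
  · intro s m hm _
    simp [← hm]

theorem isPullback_biprod_map_fst {Q : A} (p : Q ⟶ Z) (C : A) :
    IsPullback (biprod.map p (𝟙 C)) biprod.fst biprod.fst p := by
  refine ⟨⟨by simp⟩, ⟨PullbackCone.IsLimit.mk _
    (fun s => biprod.lift s.snd (s.fst ≫ biprod.snd)) ?_ ?_ ?_⟩⟩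
  · intro s
    ext
    · simpa using s.condition.symm
    · simp
  · intro s
    simp
  · intro s m hm hm'
    ext
    · simpa using hm'
    · simp [← hm]

end KernelCokernel

namespace ExactStructure

variable {A : Type u} [Category.{v} A] [Preadditive A] {E : ExactStructure A}
  {X X' Y Y' Z Z' : A}

theorem IsDeflation.epi_s7 {d : Y ⟶ Z} (hd : E.IsDeflation d) : Epi d := by
  obtain ⟨_, _, hc⟩ := hd
  exact (E.coker_of_conflation hc).epi_s7

theorem isConflation_of_isKer {i : X ⟶ Y} {i' : X' ⟶ Y} {d : Y ⟶ Z}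
    (hc : E.IsConflation i d) (hk : IsKer i' d) : E.IsConflation i' d := by
  have hk₀ := E.ker_of_conflation hc
  obtain ⟨φ, hφ, -⟩ := hk.2 i hk₀.1
  obtain ⟨ψ, hψ, -⟩ := hk₀.2 i' hk.1
  have := hk.mono_s7
  have := hk₀.mono_s7
  exact E.iso_closed
    ⟨φ, ψ, by simp [← cancel_mono i, hφ, hψ], by simp [← cancel_mono i', hφ, hψ]⟩
    (Iso.refl Y) (Iso.refl Z) (by simpa using hφ.symm) (by simp) hc

theorem isConflation_of_isCoker {i : X ⟶ Y} {d : Y ⟶ Z} {d' : Y ⟶ Z'}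
    (hc : E.IsConflation i d) (hk : IsCoker i d') : E.IsConflation i d' := by
  have hk₀ := E.coker_of_conflation hc
  obtain ⟨φ, hφ, -⟩ := hk₀.2 d' hk.1
  obtain ⟨ψ, hψ, -⟩ := hk.2 d hk₀.1
  have := hk.epi_s7
  have := hk₀.epi_s7
  exact E.iso_closed (Iso.refl X) (Iso.refl Y)
    ⟨φ, ψ, by simp [← cancel_epi d, reassoc_of% hφ, hψ],
      by simp [← cancel_epi d', reassoc_of% hψ, hφ]⟩
    (by simp) (by simpa using hφ) hc

theorem IsDeflation.iso_hom_comp {d : Y ⟶ Z} (hd : E.IsDeflation d) (e : Y' ≅ Y) :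
    E.IsDeflation (e.hom ≫ d) := by
  obtain ⟨K, j, hc⟩ := hd
  exact ⟨K, j ≫ e.inv, E.iso_closed (Iso.refl K) e.symm (Iso.refl Z) (by simp) (by simp) hc⟩

theorem IsInflation.comp_iso_hom {i : X ⟶ Y} (hi : E.IsInflation i) (e : Y ≅ Y') :
    E.IsInflation (i ≫ e.hom) := by
  obtain ⟨C, p, hc⟩ := hi
  exact ⟨C, e.inv ≫ p, E.iso_closed (Iso.refl X) e (Iso.refl C) (by simp) (by simp) hc⟩

theorem IsDeflation.of_isPullback {d : Y ⟶ Z} {f : Z' ⟶ Z} {d' : Y' ⟶ Z'} {f' : Y' ⟶ Y}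
    (hd : E.IsDeflation d) (h : IsPullback d' f' f d) : E.IsDeflation d' := by
  obtain ⟨_, _, _, h', hd''⟩ := E.ex2 d f hd
  simpa using IsDeflation.iso_hom_comp hd'' (h.isoIsPullback _ _ h')

theorem IsInflation.of_isPushout {i : X ⟶ Y} {f : X ⟶ X'} {i' : X' ⟶ Y'} {f' : Y ⟶ Y'}
    (hi : E.IsInflation i) (h : IsPushout i f f' i') : E.IsInflation i' := by
  obtain ⟨_, _, _, h', hi''⟩ := E.ex2op i f hi
  simpa using IsInflation.comp_iso_hom hi'' (h'.isoIsPushout _ _ h)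

section Biproducts

variable [HasZeroObject A]

open ZeroObject

theorem isConflation_id_zero (C : A) : E.IsConflation (𝟙 C) (0 : C ⟶ 0) := by
  have hzero : E.IsConflation (𝟙 (0 : A)) (𝟙 0) := by
    obtain ⟨_, _, hc⟩ := E.ex0 (isZero_zero A)
    exact isConflation_of_isKer hc ⟨(isZero_zero A).eq_of_src _ _,
      fun _ g _ => ⟨g, Category.comp_id g, fun _ _ => (isZero_zero A).eq_of_tgt _ _⟩⟩
  obtain ⟨_, _, hc⟩ :=
    IsInflation.of_isPushout ⟨_, _, hzero⟩ (IsPushout.of_id_fst (f := (0 : 0 ⟶ C)))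
  refine isConflation_of_isCoker hc
    ⟨comp_zero, fun _ g hg => ⟨0, ?_, fun _ _ => (isZero_zero A).eq_of_src _ _⟩⟩
  simpa using hg.symm

variable [HasBinaryBiproducts A]

theorem isDeflation_biprod_fst (B C : A) : E.IsDeflation (biprod.fst : B ⊞ C ⟶ B) :=
  IsDeflation.of_isPullback ⟨_, _, isConflation_id_zero C⟩ (IsPullback.of_has_biproduct B C)

theorem IsDeflation.biprod_desc {B C : A} {p : B ⟶ Z} (hp : E.IsDeflation p) (f : C ⟶ Z) :
    E.IsDeflation (biprod.desc p f) := by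
  have hmap : E.IsDeflation (biprod.map p (𝟙 C)) :=
    hp.of_isPullback (isPullback_biprod_map_fst p C)
  have hshear : E.IsDeflation ((Biprod.unipotentLower f).hom ≫ biprod.fst) :=
    (isDeflation_biprod_fst Z C).iso_hom_comp _
  have hfactor :
      biprod.desc p f = biprod.map p (𝟙 C) ≫ (Biprod.unipotentLower f).hom ≫ biprod.fst := by
    ext <;> simp [Biprod.ofComponents]
  rw [hfactor]
  exact E.ex1 hmap hshear

theorem isConflation_of_isKer_of_isDeflation_comp {Q : A} {i : X ⟶ Y} {d : Y ⟶ Z}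
    (hk : IsKer i d) (q : Q ⟶ Y) (hq : E.IsDeflation (q ≫ d)) : E.IsConflation i d := by
  have hsnd : E.IsDeflation (biprod.snd ≫ d : Q ⊞ Y ⟶ Z) := by
    convert (hq.biprod_desc d).iso_hom_comp (Biprod.unipotentUpper (-q)) using 1
    ext <;> simp [Biprod.ofComponents]
  obtain ⟨_, _, hc⟩ := hsnd
  have hc' := isConflation_of_isKer hc (hk.biprod_map Q)
  obtain ⟨_, _, hie⟩ := IsInflation.of_isPushout ⟨_, _, hc'⟩ (isPushout_biprod_map_snd Q i)
  exact isConflation_of_isCoker hie (E.coker_of_conflation hc').of_biprod_map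

end Biproducts

theorem EnoughProj.ext (hE : E.EnoughProj) {W V : A} {a b : W ⟶ V}
    (h : ∀ ⦃P : A⦄, E.Proj P → ∀ r : P ⟶ W, r ≫ a = r ≫ b) : a = b := by
  obtain ⟨P, r, hP, hr⟩ := hE W
  have := hr.epi_s7
  exact (cancel_epi r).1 (h hP r)

theorem EnoughProj.isKer (hE : E.EnoughProj) {i : X ⟶ Y} {d : Y ⟶ Z}
    (hinj : ∀ ⦃P : A⦄, E.Proj P → Function.Injective (fun t : P ⟶ X => t ≫ i))
    (hexact : ∀ ⦃P : A⦄, E.Proj P →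
      ∀ y : P ⟶ Y, y ≫ d = 0 ↔ ∃ x : P ⟶ X, x ≫ i = y) :
    IsKer i d := by
  have : Mono i := ⟨fun a b hab => hE.ext fun P hP r => hinj hP (by simp [hab])⟩
  refine ⟨hE.ext fun P hP r => ?_, fun W g hg => ?_⟩
  · simpa using (hexact hP (r ≫ i)).2 ⟨r, rfl⟩
  obtain ⟨P, r, hP, K, j, hc⟩ := hE W
  obtain ⟨t, ht⟩ := (hexact hP (r ≫ g)).1 (by simp [hg])
  have hjt : j ≫ t = 0 := by
    rw [← cancel_mono i, Category.assoc, ht, ← Category.assoc, (E.ker_of_conflation hc).1]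
    simp
  obtain ⟨g', hg', -⟩ := (E.coker_of_conflation hc).2 t hjt
  have := (E.coker_of_conflation hc).epi_s7
  have hgi : g' ≫ i = g := by rw [← cancel_epi r, ← Category.assoc, hg', ht]
  exact ⟨g', hgi, fun y hy => (cancel_mono i).1 (hy.trans hgi.symm)⟩

end ExactStructure

theorem IsSES.resYoneda {A : Type u} [Category.{v} A] [Preadditive A] {E : ExactStructure A}
    {X Y Z : A} {i : X ⟶ Y} {d : Y ⟶ Z}
    (h : IsSES (ProjCat E) ((resYoneda E).map i) ((resYoneda E).map d))
    ⦃P : A⦄ (hP : E.Proj P) :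
    Function.Injective (fun t : P ⟶ X => t ≫ i) ∧
      Function.Surjective (fun y : P ⟶ Y => y ≫ d) ∧
      ∀ y : P ⟶ Y, y ≫ d = 0 ↔ ∃ x : P ⟶ X, x ≫ i = y :=
  h (Opposite.op ⟨P, hP⟩)

/-- **Theorem (Step 4 of Theorem 4.2).** The restricted Yoneda functor of a Frobenius
category reflects exactness: if the image under `h` of a composable pair `X ⟶i Y ⟶d Z`
is a short exact sequence `0 → h_X → h_Y → h_Z → 0` in `Mod P`, then `(i, d)` is a
conflation of `A`. -/
theorem resYoneda_reflects_exactness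
    {A : Type u} [Category.{v} A] [Preadditive A] [HasZeroObject A] [HasBinaryBiproducts A]
    (E : ExactStructure A) (hE : E.IsFrobenius)
    ⦃X Y Z : A⦄ (i : X ⟶ Y) (d : Y ⟶ Z)
    (h : IsSES (ProjCat E) ((resYoneda E).map i) ((resYoneda E).map d)) :
    E.IsConflation i d := by
  have hker : IsKer i d :=
    hE.enoughProj.isKer (fun _ hP => (h.resYoneda hP).1) (fun _ hP => (h.resYoneda hP).2.2)
  obtain ⟨Q, p, hQ, hp⟩ := hE.enoughProj Z
  obtain ⟨q, rfl⟩ := (h.resYoneda hQ).2.1 p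
  exact E.isConflation_of_isKer_of_isDeflation_comp hker q hp

end Paper
end
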